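/- arXiv:quant-ph/0505095 — 11 statements merged into one kernel-verified Lean document; each statement's English description precedes it below -/
import Mathlib

section
/- (Wigner's theorem on invertible channels.) Let d ≥ 1 and let (A_i)_{i∈I} and (B_j)_{j∈J} be finite families of d×d complex matrices with ∑_i A_iᴴ A_i = 1 and ∑_j B_jᴴ B_j = 1 (so ρ ↦ ∑_i A_i ρ A_iᴴ and ρ ↦ ∑_j B_j ρ B_jᴴ are quantum channels). If ∑_{i∈I, j∈J} (B_j A_i) X (B_j A_i)ᴴ = X for every d×d complex matrix X (i.e. the composition of the two channels is the identity map), then there exists a unitary d×d matrix U such that ∑_i A_i X A_iᴴ = U X Uᴴ and ∑_j B_j X B_jᴴ = Uᴴ X U for every d×d matrix X. In particular, an invertible channel has completely positive inverse only if it is unitary. -/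
open Matrix BigOperators
open scoped ComplexOrder

lemma star_dot_eq_normSq {d : ℕ} (v : Fin d → ℂ) :
    star v ⬝ᵥ v = ((∑ i, Complex.normSq (v i) : ℝ) : ℂ) := by
  push_cast
  simp only [dotProduct, Pi.star_apply, Complex.star_def]
  congr 1; ext i
  rw [mul_comm, Complex.mul_conj]

lemma star_dot_self_eq_zero {d : ℕ} {v : Fin d → ℂ} (h : star v ⬝ᵥ v = 0) : v = 0 := by
  rw [star_dot_eq_normSq] at h
  have h' : ∑ i, Complex.normSq (v i) = 0 := by exact_mod_cast h
  funext i
  exact Complex.normSq_eq_zero.mp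
    (Finset.sum_eq_zero_iff_of_nonneg (fun i _ => Complex.normSq_nonneg (v i)) |>.mp h' i
      (Finset.mem_univ i))

lemma conj_vecMulVec {d : ℕ} (M : Matrix (Fin d) (Fin d) ℂ) (x : Fin d → ℂ) :
    M * vecMulVec x (star x) * Mᴴ = vecMulVec (M.mulVec x) (star (M.mulVec x)) := by
  ext a b
  simp only [mul_apply, vecMulVec_apply, conjTranspose_apply, mulVec, dotProduct,
    Pi.star_apply, Finset.mul_sum, Finset.sum_mul, star_sum, star_mul']
  congr 1; ext k
  congr 1; ext l
  ring

lemma quad_vecMulVec {d : ℕ} (u y : Fin d → ℂ) :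
    star y ⬝ᵥ (vecMulVec u (star u)).mulVec y
      = ((Complex.normSq (star u ⬝ᵥ y) : ℝ) : ℂ) := by
  have h1 : star y ⬝ᵥ (vecMulVec u (star u)).mulVec y = (star y ⬝ᵥ u) * (star u ⬝ᵥ y) := by
    simp only [dotProduct, mulVec, vecMulVec_apply, Pi.star_apply, Finset.mul_sum,
      Finset.sum_mul]
    rw [Finset.sum_comm]
    congr 1; ext a
    congr 1; ext b
    ring
  have h2 : star y ⬝ᵥ u = starRingEnd ℂ (star u ⬝ᵥ y) := by
    simp [dotProduct, Pi.star_apply, map_sum, mul_comm]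
  rw [h1, h2, mul_comm, Complex.mul_conj]

lemma dot_mulVec_sum {d : ℕ} {κ : Type*} (s : Finset κ) (M : κ → Matrix (Fin d) (Fin d) ℂ)
    (y v : Fin d → ℂ) :
    v ⬝ᵥ (∑ k ∈ s, M k).mulVec y = ∑ k ∈ s, v ⬝ᵥ (M k).mulVec y := by
  classical
  induction s using Finset.induction with
  | empty => simp [Matrix.zero_mulVec]
  | @insert a s hk ih =>
    rw [Finset.sum_insert hk, Finset.sum_insert hk, Matrix.add_mulVec, dotProduct_add, ih]

lemma mem_span_of_orth {d : ℕ} (x u : Fin d → ℂ)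
    (h : ∀ y : Fin d → ℂ, star x ⬝ᵥ y = 0 → star u ⬝ᵥ y = 0) :
    ∃ c : ℂ, u = c • x := by
  by_cases hx : x = 0
  · refine ⟨0, ?_⟩
    have := h u (by simp [hx])
    simpa using star_dot_self_eq_zero this
  · have hxx : star x ⬝ᵥ x ≠ 0 := by
      intro h0
      exact hx (star_dot_self_eq_zero h0)
    set c : ℂ := (star x ⬝ᵥ u) / (star x ⬝ᵥ x) with hc
    refine ⟨c, ?_⟩
    set w : Fin d → ℂ := u - c • x with hw
    have hxw : star x ⬝ᵥ w = 0 := by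
      simp only [hw, dotProduct_sub, dotProduct_smul, smul_eq_mul, hc]
      field_simp
      simp
    have huw : star u ⬝ᵥ w = 0 := h w hxw
    have hww : star w ⬝ᵥ w = 0 := by
      have hsw : star w = star u - starRingEnd ℂ c • star x := by
        funext a
        simp [hw, Complex.star_def, mul_comm]
      have : star w ⬝ᵥ w = star u ⬝ᵥ w - starRingEnd ℂ c * (star x ⬝ᵥ w) := by
        rw [hsw, sub_dotProduct, smul_dotProduct, smul_eq_mul]
      rw [this, huw, hxw]
      ring
    have hw0 : w = 0 := star_dot_self_eq_zero hww
    have := sub_eq_zero.mp (by simpa [hw] using hw0)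
    simpa [hw] using this

lemma eq_smul_one_of_forall_eigen {d : ℕ} (E : Matrix (Fin d) (Fin d) ℂ)
    (h : ∀ x : Fin d → ℂ, ∃ c : ℂ, E.mulVec x = c • x) :
    ∃ c : ℂ, E = c • 1 := by
  rcases Nat.eq_zero_or_pos d with hd | hd
  · exact ⟨0, by subst hd; ext i; exact absurd i.2 (by omega)⟩
  · have i0 : Fin d := ⟨0, hd⟩
    obtain ⟨c, hc⟩ := h ((Pi.single i0 1 : Fin d → ℂ))
    refine ⟨c, ?_⟩
    have key : ∀ i : Fin d, E.mulVec ((Pi.single i 1 : Fin d → ℂ)) = c • (Pi.single i 1 : Fin d → ℂ) := by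
      intro i
      obtain ⟨ci, hci⟩ := h ((Pi.single i 1 : Fin d → ℂ))
      by_cases hii : i = i0
      · subst hii; exact hc
      · obtain ⟨e, he⟩ := h ((Pi.single i0 1 + Pi.single i 1 : Fin d → ℂ))
        rw [mulVec_add, hc, hci] at he
        have h1 := congrFun he i0
        have h2 := congrFun he i
        simp [Pi.single_apply, hii, Ne.symm hii] at h1 h2
        rw [hci, h2, h1]
    ext a b
    have := congrFun (key b) a
    simp only [mulVec_single, MulOpposite.op_one] at this
    simpa [Pi.single_apply, one_apply, Matrix.smul_apply, mul_comm] using this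

lemma chan_smul {d : ℕ} {κ : Type*} [Fintype κ] (f : κ → Matrix (Fin d) (Fin d) ℂ)
    (m : κ → ℂ) (M : Matrix (Fin d) (Fin d) ℂ) (hf : ∀ k, f k = m k • M)
    (X : Matrix (Fin d) (Fin d) ℂ) :
    ∑ k, f k * X * (f k)ᴴ = ((∑ k, Complex.normSq (m k) : ℝ) : ℂ) • (M * X * Mᴴ) := by
  push_cast
  rw [Finset.sum_smul]
  apply Finset.sum_congr rfl
  intro k _
  rw [hf k, conjTranspose_smul, Matrix.smul_mul, Matrix.smul_mul, Matrix.mul_smul, smul_smul]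
  congr 1
  rw [Complex.star_def, Complex.mul_conj]

lemma chan_smul2 {d : ℕ} {κ : Type*} [Fintype κ] (f : κ → Matrix (Fin d) (Fin d) ℂ)
    (m : κ → ℂ) (M : Matrix (Fin d) (Fin d) ℂ) (hf : ∀ k, f k = m k • M) :
    ∑ k, (f k)ᴴ * f k = ((∑ k, Complex.normSq (m k) : ℝ) : ℂ) • (Mᴴ * M) := by
  push_cast
  rw [Finset.sum_smul]
  apply Finset.sum_congr rfl
  intro k _
  rw [hf k, conjTranspose_smul, Matrix.smul_mul, Matrix.mul_smul, smul_smul]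
  congr 1
  rw [Complex.star_def, mul_comm, Complex.mul_conj]

/-- Wigner's theorem on invertible channels: if the composition of two
quantum channels (in Kraus form) is the identity map, then both channels are unitary,
one the inverse of the other. -/
theorem clean_povm_stmt1 (d : ℕ) (hd : 1 ≤ d) (I J : Type) [Fintype I] [Fintype J]
    (A : I → Matrix (Fin d) (Fin d) ℂ) (B : J → Matrix (Fin d) (Fin d) ℂ)
    (hA : ∑ i, (A i)ᴴ * A i = 1) (hB : ∑ j, (B j)ᴴ * B j = 1)
    (hcomp : ∀ X : Matrix (Fin d) (Fin d) ℂ,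
      ∑ i, ∑ j, (B j * A i) * X * (B j * A i)ᴴ = X) :
    ∃ U : Matrix (Fin d) (Fin d) ℂ, Uᴴ * U = 1 ∧
      (∀ X : Matrix (Fin d) (Fin d) ℂ, ∑ i, A i * X * (A i)ᴴ = U * X * Uᴴ) ∧
      (∀ X : Matrix (Fin d) (Fin d) ℂ, ∑ j, B j * X * (B j)ᴴ = Uᴴ * X * U) := by
  classical
  have z : Fin d := ⟨0, hd⟩
  -- Step 1: each B j * A i is a scalar multiple of the identity
  have key : ∀ (i : I) (j : J), ∃ c : ℂ, B j * A i = c • 1 := by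
    intro i j
    apply eq_smul_one_of_forall_eigen
    intro x
    apply mem_span_of_orth x
    intro y hy
    have h1 := hcomp (vecMulVec x (star x))
    simp only [conj_vecMulVec] at h1
    have h2 := congrArg (fun M : Matrix (Fin d) (Fin d) ℂ => star y ⬝ᵥ M.mulVec y) h1
    simp only [dot_mulVec_sum, quad_vecMulVec, hy,
      Complex.normSq_zero, Complex.ofReal_zero] at h2
    have h3 : ∑ i', ∑ j', Complex.normSq (star ((B j' * A i').mulVec x) ⬝ᵥ y) = 0 := by
      exact_mod_cast h2
    have h4 : Complex.normSq (star ((B j * A i).mulVec x) ⬝ᵥ y) = 0 := by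
      have hnn : ∀ i' ∈ Finset.univ, (0:ℝ) ≤ ∑ j', Complex.normSq (star ((B j' * A i').mulVec x) ⬝ᵥ y) :=
        fun i' _ => Finset.sum_nonneg fun j' _ => Complex.normSq_nonneg _
      have hi := (Finset.sum_eq_zero_iff_of_nonneg hnn).mp h3 i (Finset.mem_univ i)
      exact (Finset.sum_eq_zero_iff_of_nonneg
        (fun j' _ => Complex.normSq_nonneg _)).mp hi j (Finset.mem_univ j)
    exact Complex.normSq_eq_zero.mp h4
  choose c hc using key
  -- a pinned index
  have entry_one : (1 : Matrix (Fin d) (Fin d) ℂ) z z = 1 := by simp [one_apply]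
  have smul_one_inj : ∀ a b : ℂ, a • (1 : Matrix (Fin d) (Fin d) ℂ) = b • 1 → a = b := by
    intro a b hab
    have := congrFun (congrFun hab z) z
    simpa [Matrix.smul_apply, one_apply] using this
  -- some coefficient is nonzero
  have hex : ∃ i0 j0, c i0 j0 ≠ 0 := by
    by_contra h
    push_neg at h
    have h0 : (1 : Matrix (Fin d) (Fin d) ℂ) = 0 := by
      rw [← hcomp 1]
      apply Finset.sum_eq_zero; intro i _
      apply Finset.sum_eq_zero; intro j _
      rw [hc i j, h i j]; simp
    have := congrFun (congrFun h0 z) z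
    simp [one_apply] at this
  obtain ⟨i0, j0, hc0⟩ := hex
  set A0 : Matrix (Fin d) (Fin d) ℂ := A i0 with hA0def
  set B0 : Matrix (Fin d) (Fin d) ℂ := B j0 with hB0def
  set c0 : ℂ := c i0 j0 with hc0def
  have hBA : B0 * A0 = c0 • 1 := hc i0 j0
  have hleft : (c0⁻¹ • B0) * A0 = 1 := by
    rw [Matrix.smul_mul, hBA, smul_smul, inv_mul_cancel₀ hc0, one_smul]
  have hright : A0 * (c0⁻¹ • B0) = 1 := mul_eq_one_comm.mp hleft
  have hAB1 : c0⁻¹ • (A0 * B0) = 1 := by rw [← Matrix.mul_smul]; exact hright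
  have hAB : A0 * B0 = c0 • 1 := by
    calc A0 * B0 = c0 • (c0⁻¹ • (A0 * B0)) := by
          rw [smul_smul, mul_inv_cancel₀ hc0, one_smul]
    _ = c0 • 1 := by rw [hAB1]
  -- every Kraus operator is proportional to A0 resp B0
  set μ : I → ℂ := fun i => c i j0 / c0 with hμdef
  set ν : J → ℂ := fun j => c i0 j / c0 with hνdef
  have hAi : ∀ i, A i = μ i • A0 := by
    intro i
    calc A i = (A0 * (c0⁻¹ • B0)) * A i := by rw [hright, one_mul]
    _ = c0⁻¹ • (A0 * (B0 * A i)) := by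
        rw [Matrix.mul_smul, Matrix.smul_mul, Matrix.mul_assoc]
    _ = c0⁻¹ • (A0 * (c i j0 • 1)) := by rw [hc i j0]
    _ = μ i • A0 := by
        rw [Matrix.mul_smul, Matrix.mul_one, smul_smul]
        congr 1
        show c0⁻¹ * c i j0 = c i j0 / c0
        rw [div_eq_mul_inv, mul_comm]
  have hBj : ∀ j, B j = ν j • B0 := by
    intro j
    calc B j = B j * (A0 * (c0⁻¹ • B0)) := by rw [hright, Matrix.mul_one]
    _ = c0⁻¹ • ((B j * A0) * B0) := by
        rw [Matrix.mul_smul, Matrix.mul_smul, Matrix.mul_assoc]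
    _ = c0⁻¹ • ((c i0 j • 1) * B0) := by rw [hc i0 j]
    _ = ν j • B0 := by
        rw [Matrix.smul_mul, Matrix.one_mul, smul_smul]
        congr 1
        show c0⁻¹ * c i0 j = c i0 j / c0
        rw [div_eq_mul_inv, mul_comm]
  -- the normalisation scalars
  set r : ℝ := ∑ i, Complex.normSq (μ i) with hrdef
  set t : ℝ := ∑ j, Complex.normSq (ν j) with htdef
  have hr_nonneg : 0 ≤ r := Finset.sum_nonneg fun i _ => Complex.normSq_nonneg _
  have hs : ((r : ℝ) : ℂ) • (A0ᴴ * A0) = 1 := by rw [← chan_smul2 A μ A0 hAi, hA]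
  have ht : ((t : ℝ) : ℂ) • (B0ᴴ * B0) = 1 := by rw [← chan_smul2 B ν B0 hBj, hB]
  have hr0 : ((r : ℝ) : ℂ) ≠ 0 := by
    intro h0
    rw [h0, zero_smul] at hs
    have := congrFun (congrFun hs z) z
    simp [one_apply] at this
  have ht0 : ((t : ℝ) : ℂ) ≠ 0 := by
    intro h0
    rw [h0, zero_smul] at ht
    have := congrFun (congrFun ht z) z
    simp [one_apply] at this
  have hAA : A0ᴴ * A0 = ((r:ℝ):ℂ)⁻¹ • 1 := by
    calc A0ᴴ * A0 = ((r:ℝ):ℂ)⁻¹ • (((r:ℝ):ℂ) • (A0ᴴ * A0)) := by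
          rw [smul_smul, inv_mul_cancel₀ hr0, one_smul]
    _ = ((r:ℝ):ℂ)⁻¹ • 1 := by rw [hs]
  have hBB : B0ᴴ * B0 = ((t:ℝ):ℂ)⁻¹ • 1 := by
    calc B0ᴴ * B0 = ((t:ℝ):ℂ)⁻¹ • (((t:ℝ):ℂ) • (B0ᴴ * B0)) := by
          rw [smul_smul, inv_mul_cancel₀ ht0, one_smul]
    _ = ((t:ℝ):ℂ)⁻¹ • 1 := by rw [ht]
  -- scalar relation |c0|² = (t r)⁻¹
  have hnc0 : ((Complex.normSq c0 : ℝ) : ℂ) = (((t:ℝ):ℂ) * ((r:ℝ):ℂ))⁻¹ := by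
    have e1 : (B0 * A0)ᴴ * (B0 * A0) = ((Complex.normSq c0 : ℝ) : ℂ) • 1 := by
      rw [hBA, conjTranspose_smul, Matrix.smul_mul, Matrix.mul_smul, smul_smul]
      simp [Complex.star_def, Complex.mul_conj, mul_comm]
    have e2 : (B0 * A0)ᴴ * (B0 * A0) = (((t:ℝ):ℂ)⁻¹ * ((r:ℝ):ℂ)⁻¹) • 1 := by
      rw [conjTranspose_mul, Matrix.mul_assoc, ← Matrix.mul_assoc B0ᴴ B0 A0,
        ← Matrix.mul_assoc A0ᴴ (B0ᴴ * B0) A0, hBB, Matrix.mul_smul, Matrix.mul_one,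
        Matrix.smul_mul, hAA, smul_smul]
    have := smul_one_inj _ _ (e1.symm.trans e2)
    rw [this, mul_inv]
  -- the unitary
  set sr : ℂ := ((Real.sqrt r : ℝ) : ℂ) with hsrdef
  have hsr2 : sr * sr = ((r:ℝ):ℂ) := by
    rw [hsrdef]
    norm_cast
    exact Real.mul_self_sqrt hr_nonneg
  have hsrstar : star sr = sr := by rw [hsrdef]; exact Complex.conj_ofReal _
  refine ⟨sr • A0, ?_, ?_, ?_⟩
  · rw [conjTranspose_smul, hsrstar, Matrix.smul_mul, Matrix.mul_smul, smul_smul, hsr2,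
      hAA, smul_smul, mul_inv_cancel₀ hr0, one_smul]
  · intro X
    rw [chan_smul A μ A0 hAi X, ← hrdef, conjTranspose_smul, hsrstar, Matrix.smul_mul,
      Matrix.smul_mul, Matrix.mul_smul, smul_smul, hsr2]
  · intro X
    rw [chan_smul B ν B0 hBj X, ← htdef, conjTranspose_smul, hsrstar, Matrix.smul_mul,
      Matrix.smul_mul, Matrix.mul_smul, smul_smul, hsr2]
    have hκ : A0ᴴ = (c0⁻¹ * ((r:ℝ):ℂ)⁻¹) • B0 := by
      calc A0ᴴ = A0ᴴ * (c0⁻¹ • (A0 * B0)) := by rw [hAB1, Matrix.mul_one]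
      _ = c0⁻¹ • ((A0ᴴ * A0) * B0) := by
          rw [Matrix.mul_smul, Matrix.mul_assoc]
      _ = (c0⁻¹ * ((r:ℝ):ℂ)⁻¹) • B0 := by
          rw [hAA, Matrix.smul_mul, Matrix.one_mul, smul_smul]
    have hκ' : A0 = (starRingEnd ℂ (c0⁻¹ * ((r:ℝ):ℂ)⁻¹)) • B0ᴴ := by
      have h' := congrArg conjTranspose hκ
      rw [conjTranspose_smul, conjTranspose_conjTranspose] at h'
      simpa [Complex.star_def] using h'
    rw [hκ, hκ', Matrix.smul_mul, Matrix.smul_mul, Matrix.mul_smul, smul_smul, smul_smul]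
    congr 1
    have hcc : c0 * starRingEnd ℂ c0 = (((t:ℝ):ℂ) * ((r:ℝ):ℂ))⁻¹ := by
      rw [Complex.mul_conj, hnc0]
    have hexp : starRingEnd ℂ (c0⁻¹ * ((r:ℝ):ℂ)⁻¹)
        = (starRingEnd ℂ c0)⁻¹ * ((r:ℝ):ℂ)⁻¹ := by
      simp [_root_.map_mul, map_inv₀, Complex.conj_ofReal]
    rw [hexp]
    have h9 : ((r:ℝ):ℂ) * (c0⁻¹ * ((r:ℝ):ℂ)⁻¹) * ((starRingEnd ℂ c0)⁻¹ * ((r:ℝ):ℂ)⁻¹)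
        = (c0 * starRingEnd ℂ c0)⁻¹ * ((r:ℝ):ℂ)⁻¹ := by
      rw [mul_inv]
      rw [show ((r:ℝ):ℂ) * (c0⁻¹ * ((r:ℝ):ℂ)⁻¹) * ((starRingEnd ℂ c0)⁻¹ * ((r:ℝ):ℂ)⁻¹)
          = c0⁻¹ * (starRingEnd ℂ c0)⁻¹ * (((r:ℝ):ℂ) * ((r:ℝ):ℂ)⁻¹ * ((r:ℝ):ℂ)⁻¹) by ring,
        mul_inv_cancel₀ hr0, one_mul]
    rw [h9, hcc, inv_inv, mul_assoc, mul_inv_cancel₀ hr0, mul_one]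
end

section
/- A POVM P on ℂ^d is post-processing clean if and only if every element of P has rank at most 1. That is: (∀ POVM Q on ℂ^d with any finite outcome set, Q ≻_p P implies P ≻_p Q) if and only if rank(P_e) ≤ 1 for every outcome e. -/
open Matrix
open scoped ComplexOrder

namespace CleanAux
variable {d : ℕ}

lemma real_smul_eq (c : ℝ) (M : Matrix (Fin d) (Fin d) ℂ) : c • M = (c : ℂ) • M := by
  ext i j; simp [Matrix.smul_apply, Complex.real_smul]

lemma psd_smul {M : Matrix (Fin d) (Fin d) ℂ} (hM : M.PosSemidef) {c : ℝ} (hc : 0 ≤ c) :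
    ((c : ℂ) • M).PosSemidef := by
  refine Matrix.PosSemidef.of_dotProduct_mulVec_nonneg ?_ ?_
  · unfold Matrix.IsHermitian
    rw [conjTranspose_smul, hM.1]
    congr 1
    simp
  · intro x
    rw [smul_mulVec, dotProduct_smul]
    exact smul_nonneg (by exact_mod_cast hc) (hM.dotProduct_mulVec_nonneg x)

lemma psd_sum {ι : Type*} (s : Finset ι) (f : ι → Matrix (Fin d) (Fin d) ℂ)
    (h : ∀ i ∈ s, (f i).PosSemidef) : (∑ i ∈ s, f i).PosSemidef := by
  classical
  induction s using Finset.induction_on with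
  | empty => simpa using Matrix.PosSemidef.zero
  | insert _ _ hx ih =>
    rw [Finset.sum_insert hx]
    exact Matrix.PosSemidef.add (h _ (Finset.mem_insert_self _ _))
      (ih fun i hi => h i (Finset.mem_insert_of_mem hi))

lemma psd_diag_nonneg {M : Matrix (Fin d) (Fin d) ℂ} (hM : M.PosSemidef) (i : Fin d) :
    0 ≤ M i i := by
  have := hM.dotProduct_mulVec_nonneg (Pi.single i 1)
  simpa [Matrix.mulVec_single, dotProduct, Pi.single_apply, apply_ite] using this

lemma psd_trace_real {M : Matrix (Fin d) (Fin d) ℂ} (hM : M.PosSemidef) :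
    M.trace = ((M.trace.re : ℝ) : ℂ) ∧ 0 ≤ M.trace.re := by
  have h : ∀ i, 0 ≤ M i i := psd_diag_nonneg hM
  have him : M.trace.im = 0 := by
    rw [Matrix.trace]
    simp only [Complex.im_sum, diag_apply]
    exact Finset.sum_eq_zero fun i _ => ((Complex.le_def.mp (h i)).2).symm
  refine ⟨by apply Complex.ext <;> simp [him], ?_⟩
  rw [Matrix.trace]
  simp only [Complex.re_sum, diag_apply]
  exact Finset.sum_nonneg fun i _ => (Complex.le_def.mp (h i)).1

lemma psd_eq_zero_of_trace {M : Matrix (Fin d) (Fin d) ℂ} (hM : M.PosSemidef)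
    (h : M.trace.re = 0) : M = 0 := by
  have hd : ∀ i, M i i = 0 := by
    intro i
    have h1 : ∀ i, 0 ≤ (M i i).re := fun i => (Complex.le_def.mp (psd_diag_nonneg hM i)).1
    have h2 : ∀ i, (M i i).im = 0 := fun i => ((Complex.le_def.mp (psd_diag_nonneg hM i)).2).symm
    have hre : (M i i).re = 0 := by
      have hsum : ∑ j, (M j j).re = 0 := by
        rw [Matrix.trace] at h; simpa [Complex.re_sum] using h
      exact le_antisymm (hsum ▸ Finset.single_le_sum (fun j _ => h1 j) (Finset.mem_univ i)) (h1 i)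
    exact Complex.ext hre (h2 i)
  ext i j
  have hcol : M *ᵥ Pi.single j 1 = 0 := by
    rw [← hM.dotProduct_mulVec_zero_iff]
    simp [Matrix.mulVec_single, dotProduct, Pi.single_apply, apply_ite, hd j]
  have := congrFun hcol i
  simpa [Matrix.mulVec_single] using this

lemma ker_sandwich {A B : Matrix (Fin d) (Fin d) ℂ} (hA : A.PosSemidef)
    (hBA : (B - A).PosSemidef) (x : Fin d → ℂ) (hx : B *ᵥ x = 0) : A *ᵥ x = 0 := by
  have h1 : 0 ≤ star x ⬝ᵥ A *ᵥ x := hA.dotProduct_mulVec_nonneg x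
  have h2 : 0 ≤ star x ⬝ᵥ (B - A) *ᵥ x := hBA.dotProduct_mulVec_nonneg x
  rw [sub_mulVec, dotProduct_sub, hx, dotProduct_zero, zero_sub] at h2
  exact (hA.dotProduct_mulVec_zero_iff x).mp (le_antisymm (neg_nonneg.mp h2) h1)

lemma rank_mono {A B : Matrix (Fin d) (Fin d) ℂ}
    (h : ∀ x, B *ᵥ x = 0 → A *ᵥ x = 0) : A.rank ≤ B.rank := by
  have hker : LinearMap.ker B.mulVecLin ≤ LinearMap.ker A.mulVecLin := by
    intro x hx
    rw [LinearMap.mem_ker] at hx ⊢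
    exact h x hx
  have hB := LinearMap.finrank_range_add_finrank_ker B.mulVecLin
  have hA' := LinearMap.finrank_range_add_finrank_ker A.mulVecLin
  have hk : Module.finrank ℂ (LinearMap.ker B.mulVecLin) ≤
      Module.finrank ℂ (LinearMap.ker A.mulVecLin) := Submodule.finrank_mono hker
  have e1 : A.rank = Module.finrank ℂ (LinearMap.range A.mulVecLin) := rfl
  have e2 : B.rank = Module.finrank ℂ (LinearMap.range B.mulVecLin) := rfl
  omega

lemma rank_le_one_of_span {M : Matrix (Fin d) (Fin d) ℂ} (v : Fin d → ℂ)
    (h : ∀ x, ∃ c : ℂ, M *ᵥ x = c • v) : M.rank ≤ 1 := by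
  have hle : LinearMap.range M.mulVecLin ≤ Submodule.span ℂ {v} := by
    rintro y ⟨x, rfl⟩
    obtain ⟨c, hc⟩ := h x
    rw [Matrix.mulVecLin_apply, hc]
    exact Submodule.smul_mem _ _ (Submodule.mem_span_singleton_self v)
  calc M.rank = Module.finrank ℂ (LinearMap.range M.mulVecLin) := rfl
    _ ≤ Module.finrank ℂ (Submodule.span ℂ {v}) := Submodule.finrank_mono hle
    _ ≤ 1 := by
        by_cases hv : v = 0
        · subst hv; rw [Set.singleton_zero, Submodule.span_zero]; simp
        · rw [finrank_span_singleton hv]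


lemma rankone_dom {A B : Matrix (Fin d) (Fin d) ℂ} (hA : A.PosSemidef) (hB : B.PosSemidef)
    (hBA : (B - A).PosSemidef) (hr : B.rank ≤ 1) :
    A = ((A.trace.re / B.trace.re : ℝ)) • B := by
  by_cases htr : B.trace.re = 0
  · have hB0 : B = 0 := psd_eq_zero_of_trace hB htr
    have hA0 : A = 0 := by
      apply psd_eq_zero_of_trace hA
      have h1 : 0 ≤ A.trace.re := (psd_trace_real hA).2
      have h2 : 0 ≤ (B - A).trace.re := (psd_trace_real hBA).2
      rw [hB0] at h2
      simp only [zero_sub, Matrix.trace_neg, Complex.neg_re] at h2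
      linarith
    rw [hA0, hB0, smul_zero]
  · have hdiag : ∃ i₀, B i₀ i₀ ≠ 0 := by
      by_contra hcon
      push_neg at hcon
      apply htr
      rw [Matrix.trace]
      simp [hcon]
    obtain ⟨i₀, hi₀⟩ := hdiag
    set u : Fin d → ℂ := fun i => B i i₀ with hu
    have hu0 : u ≠ 0 := fun hc => hi₀ (congrFun hc i₀)
    have humem : u ∈ LinearMap.range B.mulVecLin := by
      refine ⟨Pi.single i₀ 1, ?_⟩
      ext i
      simp [Matrix.mulVecLin_apply, Matrix.mulVec_single, hu]
    have hrange : LinearMap.range B.mulVecLin = Submodule.span ℂ {u} := by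
      symm
      apply Submodule.eq_of_le_of_finrank_le
      · rw [Submodule.span_le, Set.singleton_subset_iff]; exact humem
      · rw [finrank_span_singleton hu0]
        exact hr
    have hdagger : ∀ i j, B i j * B i₀ i₀ = B i i₀ * B i₀ j := by
      intro i j
      have hcol : B *ᵥ Pi.single j 1 ∈ Submodule.span ℂ {u} := by
        rw [← hrange]; exact ⟨Pi.single j 1, rfl⟩
      obtain ⟨c, hc⟩ := Submodule.mem_span_singleton.mp hcol
      have hci : B i j = c * B i i₀ := by
        have := congrFun hc i
        simpa [Matrix.mulVec_single, hu] using this.symm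
      have hci0 : B i₀ j = c * B i₀ i₀ := by
        have := congrFun hc i₀
        simpa [Matrix.mulVec_single, hu] using this.symm
      rw [hci, hci0]; ring
    have hddagger : ∀ i j, B i₀ i₀ * A i j = B i₀ j * A i i₀ := by
      intro i j
      have hBx : B *ᵥ ((B i₀ i₀) • (Pi.single j (1:ℂ) : Fin d → ℂ)
          - (B i₀ j) • (Pi.single i₀ (1:ℂ) : Fin d → ℂ)) = 0 := by
        funext i'
        simp only [Matrix.mulVec_sub, Matrix.mulVec_smul, Matrix.mulVec_single_one, Matrix.col_apply,
          Pi.sub_apply, Pi.smul_apply, Pi.zero_apply, smul_eq_mul, mul_one]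
        linear_combination hdagger i' j
      have hAx := ker_sandwich hA hBA _ hBx
      have := congrFun hAx i
      simp only [Matrix.mulVec_sub, Matrix.mulVec_smul, Matrix.mulVec_single_one, Matrix.col_apply,
        Pi.sub_apply, Pi.smul_apply, Pi.zero_apply, smul_eq_mul, mul_one] at this
      linear_combination this
    have hsect : ∀ i, B i₀ i₀ * A i i₀ = B i i₀ * A i₀ i₀ := by
      intro i
      have h2 := congrArg star (hddagger i₀ i)
      rw [star_mul', star_mul', hB.1.apply i₀ i₀, hA.1.apply i i₀,
        hB.1.apply i i₀, hA.1.apply i₀ i₀] at h2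
      linear_combination h2
    have hcc : (A i₀ i₀ / B i₀ i₀) * B i₀ i₀ = A i₀ i₀ := div_mul_cancel₀ _ hi₀
    have hAeq : A = (A i₀ i₀ / B i₀ i₀) • B := by
      ext i j
      rw [Matrix.smul_apply, smul_eq_mul]
      have key : B i₀ i₀ * (B i₀ i₀ * A i j)
          = B i₀ i₀ * (B i₀ i₀ * ((A i₀ i₀ / B i₀ i₀) * B i j)) := by
        linear_combination (B i₀ i₀) * (hddagger i j) + (B i₀ j) * (hsect i)
          - (A i₀ i₀) * (hdagger i j) - (B i₀ i₀ * B i j) * hcc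
      exact mul_left_cancel₀ hi₀ (mul_left_cancel₀ hi₀ key)
    have htrace : A.trace = (A i₀ i₀ / B i₀ i₀) * B.trace := by
      conv_lhs => rw [hAeq]
      rw [Matrix.trace_smul, smul_eq_mul]
    have hBt := (psd_trace_real hB).1
    have hAt := (psd_trace_real hA).1
    have hBne : B.trace ≠ 0 := by
      rw [hBt]
      exact_mod_cast htr
    have hscal : (A i₀ i₀ / B i₀ i₀) = ((A.trace.re / B.trace.re : ℝ) : ℂ) := by
      have hq : A i₀ i₀ / B i₀ i₀ = A.trace / B.trace := by
        rw [eq_div_iff hBne]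
        linear_combination -htrace
      rw [hq, hAt, hBt]
      norm_cast
    rw [real_smul_eq, ← hscal]
    exact hAeq


lemma outer_mulVec (v x : Fin d → ℂ) :
    Matrix.vecMulVec v (star v) *ᵥ x = (star v ⬝ᵥ x) • v := by
  funext i
  simp only [Matrix.mulVec, dotProduct, vecMulVec_apply, Pi.star_apply, Pi.smul_apply,
    smul_eq_mul]
  rw [Finset.sum_congr rfl (fun j _ => by ring : ∀ j ∈ Finset.univ,
    v i * star (v j) * x j = (star (v j) * x j) * v i), ← Finset.sum_mul]

lemma star_dot (v x : Fin d → ℂ) : star x ⬝ᵥ v = star (star v ⬝ᵥ x) := by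
  simp only [dotProduct, Pi.star_apply, star_sum, star_mul', star_star]
  exact Finset.sum_congr rfl fun j _ => by ring

lemma outer_psd (v : Fin d → ℂ) : (Matrix.vecMulVec v (star v)).PosSemidef := by
  refine Matrix.PosSemidef.of_dotProduct_mulVec_nonneg ?_ ?_
  · ext i j
    simp [Matrix.conjTranspose_apply, vecMulVec_apply, mul_comm]
  · intro x
    rw [outer_mulVec, dotProduct_smul (star v ⬝ᵥ x) (star x) v, star_dot, smul_eq_mul]
    exact star_mul_self_nonneg ((star x ⬝ᵥ v : ℂ))

lemma outer_rank (c : ℂ) (v : Fin d → ℂ) : (c • Matrix.vecMulVec v (star v)).rank ≤ 1 := by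
  apply rank_le_one_of_span v
  intro x
  rw [smul_mulVec, outer_mulVec, smul_smul]
  exact ⟨_, rfl⟩

lemma spectral_sum {M : Matrix (Fin d) (Fin d) ℂ} (hM : M.IsHermitian) :
    M = ∑ k, ((hM.eigenvalues k : ℝ) : ℂ) •
      Matrix.vecMulVec (fun i => (hM.eigenvectorUnitary : Matrix (Fin d) (Fin d) ℂ) i k)
        (star fun i => (hM.eigenvectorUnitary : Matrix (Fin d) (Fin d) ℂ) i k) := by
  conv_lhs => rw [hM.spectral_theorem, Unitary.conjStarAlgAut_apply]
  ext i j
  rw [Matrix.sum_apply]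
  simp only [Matrix.mul_apply, Matrix.diagonal_apply, Function.comp_apply, mul_ite, mul_zero,
    Finset.sum_ite_eq, Finset.sum_ite_eq', Finset.mem_univ, if_true, Matrix.star_apply, Matrix.smul_apply,
    Matrix.vecMulVec_apply, smul_eq_mul, Pi.star_apply, RCLike.ofReal_alg, Complex.real_smul, mul_one]
  exact Finset.sum_congr rfl fun k _ => by ring

lemma trace_re_smul (r : ℝ) (M : Matrix (Fin d) (Fin d) ℂ) :
    ((r:ℂ) • M).trace.re = r * M.trace.re := by
  rw [Matrix.trace_smul, smul_eq_mul]
  simp [Complex.mul_re]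

end CleanAux
open Matrix BigOperators
open scoped ComplexOrder

/-- A POVM on `ℂ^d` with finite outcome set `E`: a family of positive semidefinite
matrices summing to the identity. -/
def IsPOVM {d : ℕ} {E : Type} [Fintype E] (P : E → Matrix (Fin d) (Fin d) ℂ) : Prop :=
  (∀ e, (P e).PosSemidef) ∧ ∑ e, P e = 1

/-- `PostCleaner P Q` means `P ≻ₚ Q`: `Q` is obtained from `P` by classical
post-processing with a conditional probability `p(i|j)`. -/
def PostCleaner {d : ℕ} {E F : Type} [Fintype E] [Fintype F]
    (P : E → Matrix (Fin d) (Fin d) ℂ) (Q : F → Matrix (Fin d) (Fin d) ℂ) : Prop :=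
  ∃ p : F → E → ℝ, (∀ i j, 0 ≤ p i j) ∧ (∀ j, ∑ i, p i j = 1) ∧
    ∀ i, Q i = ∑ j, p i j • P j

open CleanAux in
/-- a POVM `P` is post-processing clean iff every element of `P`
has rank at most one. -/
theorem clean_povm_stmt2 (d : ℕ) (hd : 1 ≤ d) (E : Type) [Fintype E]
    (P : E → Matrix (Fin d) (Fin d) ℂ) (hP : IsPOVM P) :
    (∀ (F : Type) [Fintype F] (Q : F → Matrix (Fin d) (Fin d) ℂ), IsPOVM Q →
      PostCleaner Q P → PostCleaner P Q) ↔ (∀ e, (P e).rank ≤ 1) := by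
  classical
  obtain ⟨hPpsd, hPsum⟩ := hP
  constructor
  · -- clean ⇒ every element has rank ≤ 1
    intro hclean e
    set Q : E × Fin d → Matrix (Fin d) (Fin d) ℂ := fun f =>
      (((hPpsd f.1).1.eigenvalues f.2 : ℝ) : ℂ) •
        Matrix.vecMulVec
          (fun i => ((hPpsd f.1).1.eigenvectorUnitary : Matrix (Fin d) (Fin d) ℂ) i f.2)
          (star fun i => ((hPpsd f.1).1.eigenvectorUnitary : Matrix (Fin d) (Fin d) ℂ) i f.2)
      with hQdef
    have hQdecomp : ∀ e, P e = ∑ k, Q (e, k) := fun e => spectral_sum (hPpsd e).1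
    have hQpsd : ∀ f, (Q f).PosSemidef := fun f =>
      psd_smul (outer_psd _) ((hPpsd f.1).eigenvalues_nonneg f.2)
    have hQrank : ∀ f, (Q f).rank ≤ 1 := fun f => outer_rank _ _
    have hQsum : ∑ f, Q f = 1 := by
      rw [Fintype.sum_prod_type]
      calc ∑ e, ∑ k, Q (e, k) = ∑ e, P e :=
            Finset.sum_congr rfl fun e _ => (hQdecomp e).symm
        _ = 1 := hPsum
    have hQP : PostCleaner Q P := by
      refine ⟨fun e f => if f.1 = e then 1 else 0, ?_, ?_, ?_⟩
      · intro e f; dsimp only; split_ifs <;> norm_num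
      · intro f; simp [Finset.sum_ite_eq]
      · intro e'
        rw [Fintype.sum_prod_type]
        have hstep : ∀ e'', ∑ k, (if e'' = e' then (1:ℝ) else 0) • Q (e'', k)
            = if e'' = e' then P e'' else 0 := by
          intro e''
          split_ifs with h
          · simp only [one_smul]
            exact (hQdecomp e'').symm
          · simp
        rw [Finset.sum_congr rfl fun e'' _ => hstep e'']
        simp [Finset.sum_ite_eq']
    obtain ⟨p, hp0, hp1, hpeq⟩ := hclean (E × Fin d) Q ⟨hQpsd, hQsum⟩ hQP
    have hex : ∃ f, p f e ≠ 0 := by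
      by_contra hc
      push_neg at hc
      have := hp1 e
      simp [hc] at this
    obtain ⟨f, hf⟩ := hex
    refine le_trans ?_ (hQrank f)
    apply rank_mono
    intro x hx
    have hppos : (0:ℝ) ≤ p f e := hp0 f e
    have hPSD : ((p f e : ℂ) • P e).PosSemidef := psd_smul (hPpsd e) hppos
    have hsub : (Q f - (p f e : ℂ) • P e).PosSemidef := by
      have hsplit := Finset.sum_erase_add Finset.univ
        (fun e' => (p f e' : ℂ) • P e') (Finset.mem_univ e)
      have hQf : Q f = ∑ e', (p f e' : ℂ) • P e' := by
        rw [hpeq f]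
        exact Finset.sum_congr rfl fun e' _ => real_smul_eq (p f e') (P e')
      have : Q f - (p f e : ℂ) • P e = ∑ e' ∈ Finset.univ.erase e, (p f e' : ℂ) • P e' := by
        rw [hQf, ← hsplit]
        abel
      rw [this]
      exact psd_sum _ _ fun e' _ => psd_smul (hPpsd e') (hp0 f e')
    have hker := ker_sandwich hPSD hsub x hx
    rw [smul_mulVec] at hker
    rcases smul_eq_zero.mp hker with h | h
    · exact absurd (by exact_mod_cast h) hf
    · exact h
  · -- all rank ≤ 1 ⇒ clean
    intro hrank F _ Q hQ hQP
    obtain ⟨hQpsd, hQsum⟩ := hQ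
    obtain ⟨q, hq0, hq1, hqeq⟩ := hQP
    have hF : Nonempty F := by
      by_contra hc
      rw [not_nonempty_iff] at hc
      have h0 : (0 : Matrix (Fin d) (Fin d) ℂ) = 1 := by
        rw [← hQsum, Finset.univ_eq_empty, Finset.sum_empty]
      have := congrFun (congrFun h0 ⟨0, hd⟩) ⟨0, hd⟩
      simp [Matrix.one_apply] at this
    obtain ⟨f₀⟩ := hF
    -- trace identity
    have htr : ∀ e, ∑ f, q e f * (Q f).trace.re = (P e).trace.re := by
      intro e
      have := congrArg (fun M => (Matrix.trace M).re) (hqeq e)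
      simp only [Matrix.trace_sum, Complex.re_sum] at this
      rw [this]
      refine Finset.sum_congr rfl fun f _ => ?_
      rw [real_smul_eq, trace_re_smul]
    refine ⟨fun f e => if (P e).trace.re = 0 then (if f = f₀ then 1 else 0)
      else q e f * (Q f).trace.re / (P e).trace.re, ?_, ?_, ?_⟩
    · intro f e
      dsimp only
      split_ifs
      · norm_num
      · norm_num
      · have h1 : 0 ≤ q e f := hq0 e f
        have h2 : 0 ≤ (Q f).trace.re := (psd_trace_real (hQpsd f)).2
        have h3 : 0 ≤ (P e).trace.re := (psd_trace_real (hPpsd e)).2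
        positivity
    · intro e
      dsimp only
      split_ifs with h
      · simp [Finset.sum_ite_eq']
      · rw [← Finset.sum_div, htr e, div_self h]
    · intro f
      dsimp only
      have key : ∀ e, (if (P e).trace.re = 0 then (if f = f₀ then (1:ℝ) else 0)
          else q e f * (Q f).trace.re / (P e).trace.re) • P e = (q e f : ℂ) • Q f := by
        intro e
        have hsplit := Finset.sum_erase_add Finset.univ
          (fun f' => (q e f' : ℂ) • Q f') (Finset.mem_univ f)
        have hPe : P e = ∑ f', (q e f' : ℂ) • Q f' := by
          rw [hqeq e]
          exact Finset.sum_congr rfl fun f' _ => real_smul_eq (q e f') (Q f')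
        have hBA : (P e - (q e f : ℂ) • Q f).PosSemidef := by
          have : P e - (q e f : ℂ) • Q f = ∑ f' ∈ Finset.univ.erase f, (q e f' : ℂ) • Q f' := by
            rw [hPe, ← hsplit]
            abel
          rw [this]
          exact psd_sum _ _ fun f' _ => psd_smul (hQpsd f') (hq0 e f')
        have hA : ((q e f : ℂ) • Q f).PosSemidef := psd_smul (hQpsd f) (hq0 e f)
        by_cases h : (P e).trace.re = 0
        · rw [if_pos h]
          have hPe0 : P e = 0 := psd_eq_zero_of_trace (hPpsd e) h
          have hqQ : ((q e f : ℂ) • Q f) = 0 := by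
            apply psd_eq_zero_of_trace hA
            rw [trace_re_smul]
            have hterm : ∀ f' ∈ Finset.univ, (0:ℝ) ≤ q e f' * (Q f').trace.re :=
              fun f' _ => mul_nonneg (hq0 e f') (psd_trace_real (hQpsd f')).2
            have hzero : ∑ f', q e f' * (Q f').trace.re = 0 := by
              rw [htr e, h]
            exact (Finset.sum_eq_zero_iff_of_nonneg hterm).mp hzero f (Finset.mem_univ f)
          rw [hPe0, smul_zero, hqQ]
        · rw [if_neg h]
          have := rankone_dom hA (hPpsd e) hBA (hrank e)
          rw [trace_re_smul] at this
          rw [← this]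
      calc Q f = (1:ℝ) • Q f := (one_smul _ _).symm
        _ = (∑ e, q e f) • Q f := by rw [hq1 f]
        _ = ∑ e, (q e f) • Q f := Finset.sum_smul
        _ = ∑ e, (q e f : ℂ) • Q f :=
            Finset.sum_congr rfl fun e _ => real_smul_eq (q e f) (Q f)
        _ = ∑ e, (if (P e).trace.re = 0 then (if f = f₀ then (1:ℝ) else 0)
            else q e f * (Q f).trace.re / (P e).trace.re) • P e :=
            (Finset.sum_congr rfl fun e _ => key e).symm
end

section
/- If two POVMs P and Q on ℂ^d with the same finite outcome set are pre-processing equivalent, P ≃ Q, then for each outcome e the extreme eigenvalues of the corresponding elements coincide: λ_M(P_e) = λ_M(Q_e) and λ_m(P_e) = λ_m(Q_e). -/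
open Matrix BigOperators
open scoped ComplexOrder

/-- `Cleaner P Q` (`P ≻ Q`): there is a quantum channel in the Heisenberg picture,
given by a finite Kraus family, mapping `P` to `Q`. -/
def Cleaner {d : ℕ} {E : Type} [Fintype E]
    (P Q : E → Matrix (Fin d) (Fin d) ℂ) : Prop :=
  ∃ (n : ℕ) (A : Fin n → Matrix (Fin d) (Fin d) ℂ),
    ∑ k, (A k)ᴴ * A k = 1 ∧ ∀ e, ∑ k, (A k)ᴴ * P e * A k = Q e

/-- The largest eigenvalue of a Hermitian matrix, characterized via the Loewner order:
`λ_M(X) = inf {c : ℝ | X ≤ c • 1}`. -/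
noncomputable def lamMax {d : ℕ} (X : Matrix (Fin d) (Fin d) ℂ) : ℝ :=
  sInf {c : ℝ | ((c : ℂ) • (1 : Matrix (Fin d) (Fin d) ℂ) - X).PosSemidef}

/-- The smallest eigenvalue of a Hermitian matrix, characterized via the Loewner order:
`λ_m(X) = sup {c : ℝ | c • 1 ≤ X}`. -/
noncomputable def lamMin {d : ℕ} (X : Matrix (Fin d) (Fin d) ℂ) : ℝ :=
  sSup {c : ℝ | (X - (c : ℂ) • (1 : Matrix (Fin d) (Fin d) ℂ)).PosSemidef}

lemma psd_sum {n : Type*} [Fintype n] {ι : Type*} (s : Finset ι)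
    (f : ι → Matrix n n ℂ) (h : ∀ i ∈ s, (f i).PosSemidef) :
    (∑ i ∈ s, f i).PosSemidef := by
  classical
  induction s using Finset.induction_on with
  | empty => simpa using Matrix.PosSemidef.zero
  | insert _ _ hx ih =>
      rw [Finset.sum_insert hx]
      exact Matrix.PosSemidef.add (h _ (Finset.mem_insert_self _ _))
        (ih fun i hi => h i (Finset.mem_insert_of_mem hi))

lemma cleaner_transfer {d : ℕ} {E : Type} [Fintype E]
    {P Q : E → Matrix (Fin d) (Fin d) ℂ} (h : Cleaner P Q) (e : E) (c : ℂ)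
    (hc : (c • (1 : Matrix (Fin d) (Fin d) ℂ) - P e).PosSemidef) :
    (c • (1 : Matrix (Fin d) (Fin d) ℂ) - Q e).PosSemidef := by
  obtain ⟨n, A, h1, h2⟩ := h
  have key : c • (1 : Matrix (Fin d) (Fin d) ℂ) - Q e
      = ∑ k, (A k)ᴴ * (c • (1 : Matrix (Fin d) (Fin d) ℂ) - P e) * A k := by
    have : ∑ k, (A k)ᴴ * (c • (1 : Matrix (Fin d) (Fin d) ℂ) - P e) * A k
        = ∑ k, (c • ((A k)ᴴ * A k) - (A k)ᴴ * P e * A k) := by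
      refine Finset.sum_congr rfl fun k _ => ?_
      rw [Matrix.mul_sub, Matrix.sub_mul, Matrix.mul_smul, Matrix.mul_one,
        Matrix.smul_mul]
    rw [this, Finset.sum_sub_distrib, ← Finset.smul_sum, h1, h2]
  rw [key]
  exact psd_sum _ _ fun k _ => hc.conjTranspose_mul_mul_same (A k)

lemma cleaner_transfer' {d : ℕ} {E : Type} [Fintype E]
    {P Q : E → Matrix (Fin d) (Fin d) ℂ} (h : Cleaner P Q) (e : E) (c : ℂ)
    (hc : (P e - c • (1 : Matrix (Fin d) (Fin d) ℂ)).PosSemidef) :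
    (Q e - c • (1 : Matrix (Fin d) (Fin d) ℂ)).PosSemidef := by
  obtain ⟨n, A, h1, h2⟩ := h
  have key : Q e - c • (1 : Matrix (Fin d) (Fin d) ℂ)
      = ∑ k, (A k)ᴴ * (P e - c • (1 : Matrix (Fin d) (Fin d) ℂ)) * A k := by
    have : ∑ k, (A k)ᴴ * (P e - c • (1 : Matrix (Fin d) (Fin d) ℂ)) * A k
        = ∑ k, ((A k)ᴴ * P e * A k - c • ((A k)ᴴ * A k)) := by
      refine Finset.sum_congr rfl fun k _ => ?_
      rw [Matrix.mul_sub, Matrix.sub_mul, Matrix.mul_smul, Matrix.mul_one,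
        Matrix.smul_mul]
    rw [this, Finset.sum_sub_distrib, ← Finset.smul_sum, h1, h2]
  rw [key]
  exact psd_sum _ _ fun k _ => hc.conjTranspose_mul_mul_same (A k)

/-- pre-processing equivalent POVMs have elementwise equal extreme
eigenvalues. -/
theorem clean_povm_stmt3 (d : ℕ) (hd : 1 ≤ d) (E : Type) [Fintype E]
    (P Q : E → Matrix (Fin d) (Fin d) ℂ) (hP : IsPOVM P) (hQ : IsPOVM Q)
    (hPQ : Cleaner P Q) (hQP : Cleaner Q P) :
    ∀ e, lamMax (P e) = lamMax (Q e) ∧ lamMin (P e) = lamMin (Q e) := by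
  intro e
  constructor
  · unfold lamMax
    congr 1
    ext c
    exact ⟨fun h => cleaner_transfer hPQ e c h, fun h => cleaner_transfer hQP e c h⟩
  · unfold lamMin
    congr 1
    ext c
    exact ⟨fun h => cleaner_transfer' hPQ e c h, fun h => cleaner_transfer' hQP e c h⟩
end

section
/- Let P and Q be POVMs on ℂ^d with the same finite outcome set E, and suppose Rng(Q) ⊆ Rng(P). Then the assignment P_e ↦ Q_e extends to a well-defined positive linear map on the span of the P_e. Concretely: for every family of real coefficients (λ_e)_{e∈E}, (i) if ∑_e λ_e P_e = 0 then ∑_e λ_e Q_e = 0, and (ii) if ∑_e λ_e P_e is positive semidefinite then ∑_e λ_e Q_e is positive semidefinite. -/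
open Matrix BigOperators
open scoped ComplexOrder

/-- The range of a POVM: all vectors of outcome probabilities `(Tr(ρ P_e))_e` as `ρ`
ranges over density matrices. -/
def Rng {d : ℕ} {E : Type} [Fintype E]
    (P : E → Matrix (Fin d) (Fin d) ℂ) : Set (E → ℝ) :=
  {p | ∃ ρ : Matrix (Fin d) (Fin d) ℂ, ρ.PosSemidef ∧ ρ.trace = 1 ∧
    ∀ e, (ρ * P e).trace = (p e : ℂ)}

lemma diag_nonneg' {n : Type*} [Fintype n] [DecidableEq n] {M : Matrix n n ℂ}
    (h : M.PosSemidef) (i : n) : 0 ≤ M i i := by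
  simpa [Matrix.mulVec_single, dotProduct, Pi.single_apply, apply_ite] using h.dotProduct_mulVec_nonneg (Pi.single i 1)

lemma trace_nonneg' {n : Type*} [Fintype n] [DecidableEq n] {M : Matrix n n ℂ}
    (h : M.PosSemidef) : 0 ≤ M.trace := by
  rw [Matrix.trace]
  exact Finset.sum_nonneg fun i _ => diag_nonneg' h i

lemma trace_mul_nonneg' {n : Type*} [Fintype n] [DecidableEq n] {A B : Matrix n n ℂ}
    (hA : A.PosSemidef) (hB : B.PosSemidef) : 0 ≤ (A * B).trace := by
  open scoped MatrixOrder in obtain ⟨C, rfl⟩ := CStarAlgebra.nonneg_iff_eq_star_mul_self.mp hA.nonneg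
  rw [Matrix.mul_assoc, Matrix.trace_mul_comm]
  exact trace_nonneg' (hB.mul_mul_conjTranspose_same C)

lemma quad_eq_trace' {n : Type*} [Fintype n] (M : Matrix n n ℂ) (x : n → ℂ) :
    star x ⬝ᵥ M *ᵥ x = (Matrix.vecMulVec x (star x) * M).trace := by
  simp only [Matrix.trace, Matrix.diag, Matrix.mul_apply, Matrix.vecMulVec_apply,
    dotProduct, Matrix.mulVec, Pi.star_apply, Finset.mul_sum]
  rw [Finset.sum_comm]
  apply Finset.sum_congr rfl; intro i _
  apply Finset.sum_congr rfl; intro j _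
  ring

lemma vecMulVec_posSemidef' {n : Type*} [Fintype n] (x : n → ℂ) :
    (Matrix.vecMulVec x (star x)).PosSemidef := by
  rw [Matrix.vecMulVec_eq Unit, ← Matrix.conjTranspose_replicateCol]
  exact Matrix.posSemidef_self_mul_conjTranspose _

lemma posSemidef_real_smul' {n : Type*} [Fintype n] {c : ℝ} (hc : 0 ≤ c)
    {M : Matrix n n ℂ} (hM : M.PosSemidef) : (c • M).PosSemidef := by
  rw [Matrix.posSemidef_iff_dotProduct_mulVec]
  constructor
  · rw [Matrix.IsHermitian, Matrix.conjTranspose_smul, star_trivial, hM.1]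
  · intro x
    rw [Matrix.smul_mulVec, dotProduct_smul, RCLike.real_smul_eq_coe_mul]
    exact mul_nonneg (RCLike.ofReal_nonneg.mpr hc) (hM.dotProduct_mulVec_nonneg x)

lemma nonneg_eq_re' {z : ℂ} (hz : 0 ≤ z) : z = ((z.re : ℝ) : ℂ) := by
  have him := (Complex.le_def.mp hz).2
  apply Complex.ext <;> simp [← him]

/-- if `Rng Q ⊆ Rng P`, then `P_e ↦ Q_e` extends to a well-defined
positive linear map on the real span of the `P_e`. -/
theorem clean_povm_stmt4 (d : ℕ) (hd : 1 ≤ d) (E : Type) [Fintype E]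
    (P Q : E → Matrix (Fin d) (Fin d) ℂ) (hP : IsPOVM P) (hQ : IsPOVM Q)
    (hRng : Rng Q ⊆ Rng P) :
    ∀ lam : E → ℝ,
      ((∑ e, lam e • P e = 0) → ∑ e, lam e • Q e = 0) ∧
      ((∑ e, lam e • P e).PosSemidef → (∑ e, lam e • Q e).PosSemidef) := by
  have key : ∀ lam : E → ℝ, (∑ e, lam e • P e).PosSemidef → (∑ e, lam e • Q e).PosSemidef := by
    intro lam hM
    rw [Matrix.posSemidef_iff_dotProduct_mulVec]
    constructor
    · -- Hermitian
      rw [Matrix.IsHermitian, Matrix.conjTranspose_sum]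
      apply Finset.sum_congr rfl
      intro e _
      rw [Matrix.conjTranspose_smul, star_trivial, (hQ.1 e).1]
    · intro x
      by_cases hx : x = 0
      · simp [hx]
      -- normalization constant
      set t : ℝ := ∑ i, Complex.normSq (x i) with ht
      have htpos : 0 < t := by
        have : ∃ i, x i ≠ 0 := by
          by_contra h
          push_neg at h
          exact hx (funext h)
        obtain ⟨i, hi⟩ := this
        exact Finset.sum_pos' (fun j _ => Complex.normSq_nonneg _)
          ⟨i, Finset.mem_univ i, Complex.normSq_pos.mpr hi⟩
      set V : Matrix (Fin d) (Fin d) ℂ := Matrix.vecMulVec x (star x) with hV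
      have hVtrace : V.trace = (t : ℂ) := by
        simp only [hV, Matrix.trace, Matrix.diag, Matrix.vecMulVec_apply, Pi.star_apply,
          ht, Complex.ofReal_sum]
        exact Finset.sum_congr rfl fun i _ => (Complex.mul_conj (x i))
      set ρ : Matrix (Fin d) (Fin d) ℂ := (t⁻¹ : ℝ) • V with hρ
      have hρPSD : ρ.PosSemidef := posSemidef_real_smul' (inv_nonneg.mpr htpos.le)
        (vecMulVec_posSemidef' x)
      have hρtrace : ρ.trace = 1 := by
        rw [hρ, Matrix.trace_smul, hVtrace, RCLike.real_smul_eq_coe_mul]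
        push_cast
        apply inv_mul_cancel₀
        exact Complex.ofReal_ne_zero.mpr htpos.ne'
      set p : E → ℝ := fun e => ((ρ * Q e).trace).re with hp
      have hmem : p ∈ Rng Q := by
        refine ⟨ρ, hρPSD, hρtrace, fun e => ?_⟩
        have h0 : 0 ≤ (ρ * Q e).trace := trace_mul_nonneg' hρPSD (hQ.1 e)
        exact nonneg_eq_re' h0
      obtain ⟨σ, hσPSD, hσtrace, hσp⟩ := hRng hmem
      -- the trace identity
      have htr : (ρ * ∑ e, lam e • Q e).trace = (σ * ∑ e, lam e • P e).trace := by
        rw [Finset.mul_sum, Finset.mul_sum, Matrix.trace_sum, Matrix.trace_sum]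
        apply Finset.sum_congr rfl
        intro e _
        rw [Matrix.mul_smul, Matrix.mul_smul, Matrix.trace_smul, Matrix.trace_smul, hσp e]
        congr 1
        have h0 : 0 ≤ (ρ * Q e).trace := trace_mul_nonneg' hρPSD (hQ.1 e)
        exact nonneg_eq_re' h0
      have hVρ : V = (t : ℝ) • ρ := by
        rw [hρ, smul_smul, mul_inv_cancel₀ htpos.ne', one_smul]
      rw [quad_eq_trace', ← hV, hVρ, Matrix.smul_mul, Matrix.trace_smul, htr,
        RCLike.real_smul_eq_coe_mul]
      exact mul_nonneg (RCLike.ofReal_nonneg.mpr htpos.le) (trace_mul_nonneg' hσPSD hM)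
  intro lam
  refine ⟨?_, key lam⟩
  intro h0
  have hpos : (∑ e, lam e • Q e).PosSemidef := key lam (h0 ▸ Matrix.PosSemidef.zero)
  have hneg : (∑ e, (-lam) e • Q e).PosSemidef := by
    apply key
    have : ∑ e, (-lam) e • P e = -(∑ e, lam e • P e) := by
      simp [neg_smul]
    rw [this, h0, neg_zero]
    exact Matrix.PosSemidef.zero
  have hneg' : (-(∑ e, lam e • Q e)).PosSemidef := by
    have : ∑ e, (-lam) e • Q e = -(∑ e, lam e • Q e) := by simp [neg_smul]
    rwa [this] at hneg
  -- PSD and -PSD implies zero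
  ext i j
  have hv : ∀ y : Fin d → ℂ, (∑ e, lam e • Q e) *ᵥ y = 0 := by
    intro y
    rw [← hpos.dotProduct_mulVec_zero_iff]
    have h1 := hpos.dotProduct_mulVec_nonneg y
    have h2 := hneg'.dotProduct_mulVec_nonneg y
    rw [Matrix.neg_mulVec, dotProduct_neg, neg_nonneg] at h2
    exact le_antisymm h2 h1
  have := congrFun (hv (Pi.single j 1)) i
  simpa [Matrix.mulVec_single] using this
end

section
/- Two effects are pre-processing equivalent exactly when their extreme eigenvalues agree: for d×d Hermitian matrices P, Q with 0 ≤ P ≤ 1 and 0 ≤ Q ≤ 1, there exist finite Kraus families (A_k) and (B_l) with ∑_k A_kᴴ A_k = 1, ∑_l B_lᴴ B_l = 1, ∑_k A_kᴴ P A_k = Q and ∑_l B_lᴴ Q B_l = P, if and only if λ_M(P) = λ_M(Q) and λ_m(P) = λ_m(Q). -/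
open Matrix BigOperators
open scoped ComplexOrder

namespace CleanPovmAux

variable {d : ℕ}

lemma ortho_dot {X : Matrix (Fin d) (Fin d) ℂ} (hX : X.IsHermitian) (i j : Fin d) :
    star ⇑(hX.eigenvectorBasis i) ⬝ᵥ ⇑(hX.eigenvectorBasis j) = if i = j then 1 else 0 := by
  have h := hX.eigenvectorBasis.orthonormal
  rw [orthonormal_iff_ite] at h
  rw [← h i j, EuclideanSpace.inner_eq_star_dotProduct, dotProduct_comm]

lemma conjT_vecMulVec (a b : Fin d → ℂ) :
    (vecMulVec a (star b))ᴴ = vecMulVec b (star a) := by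
  ext x y
  simp [vecMulVec_apply, conjTranspose_apply, mul_comm]

lemma sandwich (X : Matrix (Fin d) (Fin d) ℂ) (a b : Fin d → ℂ) :
    (vecMulVec a (star b))ᴴ * X * (vecMulVec a (star b))
      = (star a ⬝ᵥ (X *ᵥ a)) • vecMulVec b (star b) := by
  rw [conjT_vecMulVec]
  ext x y
  simp only [mul_apply, vecMulVec_apply, Matrix.smul_apply, dotProduct, mulVec,
    Pi.star_apply, smul_eq_mul, Finset.sum_mul, Finset.mul_sum]
  rw [Finset.sum_comm]
  apply Finset.sum_congr rfl; intro k _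
  apply Finset.sum_congr rfl; intro j _
  ring

lemma smul_one_sub_psd_iff {X : Matrix (Fin d) (Fin d) ℂ} (hX : X.IsHermitian) (c : ℝ) :
    (((c:ℝ):ℂ) • (1 : Matrix (Fin d) (Fin d) ℂ) - X).PosSemidef ↔ ∀ i, hX.eigenvalues i ≤ c := by
  constructor
  · intro h i
    have hv := h.dotProduct_mulVec_nonneg ⇑(hX.eigenvectorBasis i)
    rw [sub_mulVec, smul_mulVec, one_mulVec, hX.mulVec_eigenvectorBasis,
      dotProduct_sub, dotProduct_smul, dotProduct_smul, ortho_dot hX i i] at hv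
    simp only [if_true, smul_eq_mul, mul_one, Complex.real_smul] at hv
    have : ((c - hX.eigenvalues i : ℝ) : ℂ) = (c:ℂ) - (hX.eigenvalues i : ℂ) := by push_cast; ring
    rw [← this] at hv
    have := (Complex.zero_le_real).mp hv
    linarith
  · intro h
    have hU : (hX.eigenvectorUnitary : Matrix (Fin d) (Fin d) ℂ)
        * star (hX.eigenvectorUnitary : Matrix (Fin d) (Fin d) ℂ) = 1 :=
      mem_unitaryGroup_iff.mp hX.eigenvectorUnitary.2
    have hdiag : diagonal (fun i => ((c:ℂ) - (hX.eigenvalues i : ℂ)))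
        = ((c:ℝ):ℂ) • (1 : Matrix (Fin d) (Fin d) ℂ)
          - diagonal (RCLike.ofReal ∘ hX.eigenvalues) := by
      ext i j
      rcases eq_or_ne i j with rfl | hij
      · simp [Matrix.diagonal_apply_eq, Matrix.one_apply_eq]
      · simp [Matrix.diagonal_apply_ne _ hij, Matrix.one_apply_ne hij]
    have key : ((c:ℝ):ℂ) • (1 : Matrix (Fin d) (Fin d) ℂ) - X
        = (hX.eigenvectorUnitary : Matrix (Fin d) (Fin d) ℂ)
          * diagonal (fun i => ((c:ℂ) - (hX.eigenvalues i : ℂ)))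
          * (hX.eigenvectorUnitary : Matrix (Fin d) (Fin d) ℂ)ᴴ := by
      rw [← Matrix.star_eq_conjTranspose, hdiag, Matrix.mul_sub, Matrix.sub_mul,
        ← (hX.spectral_theorem.trans (Unitary.conjStarAlgAut_apply _ _))]
      congr 1
      rw [Matrix.mul_smul, Matrix.smul_mul, mul_one, hU]
    rw [key]
    refine PosSemidef.mul_mul_conjTranspose_same ?_ _
    refine PosSemidef.diagonal ?_
    intro i
    have : (0:ℝ) ≤ c - hX.eigenvalues i := by linarith [h i]
    have h2 : ((0:ℝ):ℂ) ≤ ((c - hX.eigenvalues i : ℝ) : ℂ) := Complex.real_le_real.mpr this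
    simpa [sub_eq_add_neg] using h2

lemma sub_smul_one_psd_iff {X : Matrix (Fin d) (Fin d) ℂ} (hX : X.IsHermitian) (c : ℝ) :
    (X - ((c:ℝ):ℂ) • (1 : Matrix (Fin d) (Fin d) ℂ)).PosSemidef ↔ ∀ i, c ≤ hX.eigenvalues i := by
  constructor
  · intro h i
    have hv := h.dotProduct_mulVec_nonneg ⇑(hX.eigenvectorBasis i)
    rw [sub_mulVec, smul_mulVec, one_mulVec, hX.mulVec_eigenvectorBasis,
      dotProduct_sub, dotProduct_smul, dotProduct_smul, ortho_dot hX i i] at hv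
    simp only [if_true, smul_eq_mul, mul_one, Complex.real_smul] at hv
    have : ((hX.eigenvalues i - c : ℝ) : ℂ) = (hX.eigenvalues i:ℂ) - (c : ℂ) := by push_cast; ring
    rw [← this] at hv
    have := (Complex.zero_le_real).mp hv
    linarith
  · intro h
    have hU : (hX.eigenvectorUnitary : Matrix (Fin d) (Fin d) ℂ)
        * star (hX.eigenvectorUnitary : Matrix (Fin d) (Fin d) ℂ) = 1 :=
      mem_unitaryGroup_iff.mp hX.eigenvectorUnitary.2
    have hdiag : diagonal (fun i => ((hX.eigenvalues i : ℂ) - (c:ℂ)))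
        = diagonal (RCLike.ofReal ∘ hX.eigenvalues)
          - ((c:ℝ):ℂ) • (1 : Matrix (Fin d) (Fin d) ℂ) := by
      ext i j
      rcases eq_or_ne i j with rfl | hij
      · simp [Matrix.diagonal_apply_eq, Matrix.one_apply_eq]
      · simp [Matrix.diagonal_apply_ne _ hij, Matrix.one_apply_ne hij]
    have key : X - ((c:ℝ):ℂ) • (1 : Matrix (Fin d) (Fin d) ℂ)
        = (hX.eigenvectorUnitary : Matrix (Fin d) (Fin d) ℂ)
          * diagonal (fun i => ((hX.eigenvalues i : ℂ) - (c:ℂ)))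
          * (hX.eigenvectorUnitary : Matrix (Fin d) (Fin d) ℂ)ᴴ := by
      rw [← Matrix.star_eq_conjTranspose, hdiag, Matrix.mul_sub, Matrix.sub_mul,
        ← (hX.spectral_theorem.trans (Unitary.conjStarAlgAut_apply _ _))]
      congr 1
      rw [Matrix.mul_smul, Matrix.smul_mul, mul_one, hU]
    rw [key]
    refine PosSemidef.mul_mul_conjTranspose_same ?_ _
    refine PosSemidef.diagonal ?_
    intro i
    have : (0:ℝ) ≤ hX.eigenvalues i - c := by linarith [h i]
    have h2 : ((0:ℝ):ℂ) ≤ ((hX.eigenvalues i - c : ℝ) : ℂ) := Complex.real_le_real.mpr this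
    simpa [sub_eq_add_neg] using h2

lemma lamMax_spec (hd : 0 < d) {X : Matrix (Fin d) (Fin d) ℂ} (hX : X.IsHermitian) :
    (∀ i, hX.eigenvalues i ≤ lamMax X) ∧ (∃ i, hX.eigenvalues i = lamMax X) := by
  have hne : (Finset.univ : Finset (Fin d)).Nonempty := ⟨⟨0, hd⟩, Finset.mem_univ _⟩
  have hset : {c : ℝ | ((c:ℂ) • (1 : Matrix (Fin d) (Fin d) ℂ) - X).PosSemidef}
      = Set.Ici (Finset.univ.sup' hne hX.eigenvalues) := by
    ext c
    rw [Set.mem_setOf_eq, smul_one_sub_psd_iff hX, Set.mem_Ici, Finset.sup'_le_iff]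
    simp
  have heq : lamMax X = Finset.univ.sup' hne hX.eigenvalues := by
    rw [lamMax, hset, csInf_Ici]
  constructor
  · intro i; rw [heq]; exact Finset.le_sup' _ (Finset.mem_univ i)
  · obtain ⟨i, _, hi⟩ := Finset.exists_mem_eq_sup' hne hX.eigenvalues
    exact ⟨i, by rw [heq, hi]⟩

lemma lamMin_spec (hd : 0 < d) {X : Matrix (Fin d) (Fin d) ℂ} (hX : X.IsHermitian) :
    (∀ i, lamMin X ≤ hX.eigenvalues i) ∧ (∃ i, hX.eigenvalues i = lamMin X) := by
  have hne : (Finset.univ : Finset (Fin d)).Nonempty := ⟨⟨0, hd⟩, Finset.mem_univ _⟩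
  have hset : {c : ℝ | (X - (c:ℂ) • (1 : Matrix (Fin d) (Fin d) ℂ)).PosSemidef}
      = Set.Iic (Finset.univ.inf' hne hX.eigenvalues) := by
    ext c
    rw [Set.mem_setOf_eq, sub_smul_one_psd_iff hX, Set.mem_Iic, Finset.le_inf'_iff]
    simp
  have heq : lamMin X = Finset.univ.inf' hne hX.eigenvalues := by
    rw [lamMin, hset, csSup_Iic]
  constructor
  · intro i; rw [heq]; exact Finset.inf'_le _ (Finset.mem_univ i)
  · obtain ⟨i, _, hi⟩ := Finset.exists_mem_eq_inf' hne hX.eigenvalues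
    exact ⟨i, by rw [heq, hi]⟩

lemma channel_conj {n : ℕ} {A : Fin n → Matrix (Fin d) (Fin d) ℂ}
    {P Q : Matrix (Fin d) (Fin d) ℂ}
    (h1 : ∑ k, (A k)ᴴ * A k = 1) (h2 : ∑ k, (A k)ᴴ * P * A k = Q) (c : ℂ) :
    ∑ k, (A k)ᴴ * (c • (1 : Matrix (Fin d) (Fin d) ℂ) - P) * A k = c • 1 - Q := by
  have h : ∀ k, (A k)ᴴ * (c • (1 : Matrix (Fin d) (Fin d) ℂ) - P) * A k
      = c • ((A k)ᴴ * A k) - (A k)ᴴ * P * A k := by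
    intro k
    rw [Matrix.mul_sub, Matrix.sub_mul, Matrix.mul_smul, Matrix.smul_mul, mul_one]
  simp_rw [h]
  rw [Finset.sum_sub_distrib, ← Finset.smul_sum, h1, h2]

lemma channel_conj' {n : ℕ} {A : Fin n → Matrix (Fin d) (Fin d) ℂ}
    {P Q : Matrix (Fin d) (Fin d) ℂ}
    (h1 : ∑ k, (A k)ᴴ * A k = 1) (h2 : ∑ k, (A k)ᴴ * P * A k = Q) (c : ℂ) :
    ∑ k, (A k)ᴴ * (P - c • (1 : Matrix (Fin d) (Fin d) ℂ)) * A k = Q - c • 1 := by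
  have h : ∀ k, (A k)ᴴ * (P - c • (1 : Matrix (Fin d) (Fin d) ℂ)) * A k
      = (A k)ᴴ * P * A k - c • ((A k)ᴴ * A k) := by
    intro k
    rw [Matrix.mul_sub, Matrix.sub_mul, Matrix.mul_smul, Matrix.smul_mul, mul_one]
  simp_rw [h]
  rw [Finset.sum_sub_distrib, ← Finset.smul_sum, h1, h2]

lemma psd_sum {n : ℕ} (A : Fin n → Matrix (Fin d) (Fin d) ℂ)
    {R : Matrix (Fin d) (Fin d) ℂ} (hR : R.PosSemidef) :
    (∑ k, (A k)ᴴ * R * A k).PosSemidef := by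
  classical
  induction (Finset.univ : Finset (Fin n)) using Finset.induction_on with
  | empty => simpa using Matrix.PosSemidef.zero
  | insert _ _ h ih =>
    rw [Finset.sum_insert h]
    exact (hR.conjTranspose_mul_mul_same _).add ih

lemma completeness {Q : Matrix (Fin d) (Fin d) ℂ} (hQ : Q.IsHermitian) :
    ∑ i, vecMulVec ⇑(hQ.eigenvectorBasis i) (star ⇑(hQ.eigenvectorBasis i)) = 1 := by
  have hU : (hQ.eigenvectorUnitary : Matrix (Fin d) (Fin d) ℂ)
      * star (hQ.eigenvectorUnitary : Matrix (Fin d) (Fin d) ℂ) = 1 :=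
    mem_unitaryGroup_iff.mp hQ.eigenvectorUnitary.2
  rw [← hU]
  ext x y
  rw [Matrix.sum_apply, Matrix.mul_apply]
  apply Finset.sum_congr rfl
  intro j _
  simp [vecMulVec_apply, hQ.eigenvectorUnitary_apply, Matrix.star_apply]

lemma spectral_sum {Q : Matrix (Fin d) (Fin d) ℂ} (hQ : Q.IsHermitian) :
    ∑ i, (hQ.eigenvalues i : ℂ) •
      vecMulVec ⇑(hQ.eigenvectorBasis i) (star ⇑(hQ.eigenvectorBasis i)) = Q := by
  conv_rhs => rw [hQ.spectral_theorem, Unitary.conjStarAlgAut_apply]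
  ext x y
  rw [Matrix.sum_apply, Matrix.mul_apply]
  apply Finset.sum_congr rfl
  intro j _
  rw [Matrix.mul_diagonal]
  simp [vecMulVec_apply, hQ.eigenvectorUnitary_apply, Matrix.star_apply]
  ring

lemma term_eval (X : Matrix (Fin d) (Fin d) ℂ) {s : ℝ} (hs : 0 ≤ s) (a b : Fin d → ℂ) :
    ((Real.sqrt s : ℂ) • vecMulVec a (star b))ᴴ * X * ((Real.sqrt s : ℂ) • vecMulVec a (star b))
      = ((s : ℂ) * (star a ⬝ᵥ (X *ᵥ a))) • vecMulVec b (star b) := by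
  rw [conjTranspose_smul, Matrix.smul_mul, Matrix.smul_mul, Matrix.mul_smul,
    smul_smul, sandwich, smul_smul]
  congr 1
  rw [Complex.star_def, Complex.conj_ofReal, ← Complex.ofReal_mul,
    Real.mul_self_sqrt hs]

lemma term_eval' {s : ℝ} (hs : 0 ≤ s) (a b : Fin d → ℂ) (ha : star a ⬝ᵥ a = 1) :
    ((Real.sqrt s : ℂ) • vecMulVec a (star b))ᴴ * ((Real.sqrt s : ℂ) • vecMulVec a (star b))
      = (s : ℂ) • vecMulVec b (star b) := by
  have h := term_eval (1 : Matrix (Fin d) (Fin d) ℂ) hs a b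
  rw [mul_one] at h
  rw [h, one_mulVec, ha, mul_one]

lemma build {P Q : Matrix (Fin d) (Fin d) ℂ} (hQ : Q.IsHermitian)
    (u v : Fin d → ℂ) (huu : star u ⬝ᵥ u = 1) (hvv : star v ⬝ᵥ v = 1)
    (Mr mr : ℝ) (hu : star u ⬝ᵥ (P *ᵥ u) = (Mr:ℂ)) (hv : star v ⬝ᵥ (P *ᵥ v) = (mr:ℂ))
    (t : Fin d → ℝ) (ht0 : ∀ i, 0 ≤ t i) (ht1 : ∀ i, t i ≤ 1)
    (htq : ∀ i, t i * Mr + (1 - t i) * mr = hQ.eigenvalues i) :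
    ∃ (n : ℕ) (A : Fin n → Matrix (Fin d) (Fin d) ℂ),
      ∑ k, (A k)ᴴ * A k = 1 ∧ ∑ k, (A k)ᴴ * P * A k = Q := by
  set w : Fin d → Fin d → ℂ := fun i => ⇑(hQ.eigenvectorBasis i) with hw
  set W : Fin d → Matrix (Fin d) (Fin d) ℂ := fun i => vecMulVec (w i) (star (w i)) with hW
  refine ⟨d + d, Fin.addCases
      (fun i => (Real.sqrt (t i) : ℂ) • vecMulVec u (star (w i)))
      (fun i => (Real.sqrt (1 - t i) : ℂ) • vecMulVec v (star (w i))), ?_, ?_⟩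
  · rw [Fin.sum_univ_add]
    simp only [Fin.addCases_left, Fin.addCases_right]
    have e1 : ∀ i : Fin d, ((Real.sqrt (t i) : ℂ) • vecMulVec u (star (w i)))ᴴ
        * ((Real.sqrt (t i) : ℂ) • vecMulVec u (star (w i))) = (t i : ℂ) • W i :=
      fun i => term_eval' (ht0 i) u (w i) huu
    have e2 : ∀ i : Fin d, ((Real.sqrt (1 - t i) : ℂ) • vecMulVec v (star (w i)))ᴴ
        * ((Real.sqrt (1 - t i) : ℂ) • vecMulVec v (star (w i)))
        = ((1 - t i : ℝ) : ℂ) • W i :=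
      fun i => term_eval' (by linarith [ht1 i]) v (w i) hvv
    simp_rw [e1, e2]
    rw [← Finset.sum_add_distrib]
    have : ∀ i : Fin d, (t i : ℂ) • W i + ((1 - t i : ℝ) : ℂ) • W i = W i := by
      intro i
      rw [← add_smul]
      have : ((t i : ℝ) : ℂ) + ((1 - t i : ℝ) : ℂ) = 1 := by push_cast; ring
      rw [this, one_smul]
    simp_rw [this]
    exact completeness hQ
  · rw [Fin.sum_univ_add]
    simp only [Fin.addCases_left, Fin.addCases_right]
    have e1 : ∀ i : Fin d, ((Real.sqrt (t i) : ℂ) • vecMulVec u (star (w i)))ᴴ * P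
        * ((Real.sqrt (t i) : ℂ) • vecMulVec u (star (w i)))
        = ((t i * Mr : ℝ) : ℂ) • W i := by
      intro i
      rw [term_eval P (ht0 i) u (w i), hu]
      push_cast; ring_nf; rfl
    have e2 : ∀ i : Fin d, ((Real.sqrt (1 - t i) : ℂ) • vecMulVec v (star (w i)))ᴴ * P
        * ((Real.sqrt (1 - t i) : ℂ) • vecMulVec v (star (w i)))
        = (((1 - t i) * mr : ℝ) : ℂ) • W i := by
      intro i
      rw [term_eval P (by linarith [ht1 i]) v (w i), hv]
      push_cast; ring_nf; rfl
    simp_rw [e1, e2]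
    rw [← Finset.sum_add_distrib]
    have : ∀ i : Fin d, ((t i * Mr : ℝ) : ℂ) • W i + (((1 - t i) * mr : ℝ) : ℂ) • W i
        = (hQ.eigenvalues i : ℂ) • W i := by
      intro i
      rw [← add_smul]
      congr 1
      rw [← Complex.ofReal_add, htq i]
    simp_rw [this]
    exact spectral_sum hQ

lemma exists_channel (hd : 0 < d) {P Q : Matrix (Fin d) (Fin d) ℂ}
    (hP : P.IsHermitian) (hQ : Q.IsHermitian)
    (hM : lamMax P = lamMax Q) (hm : lamMin P = lamMin Q) :
    ∃ (n : ℕ) (A : Fin n → Matrix (Fin d) (Fin d) ℂ),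
      ∑ k, (A k)ᴴ * A k = 1 ∧ ∑ k, (A k)ᴴ * P * A k = Q := by
  obtain ⟨iM, hiM⟩ := (lamMax_spec hd hP).2
  obtain ⟨im, him⟩ := (lamMin_spec hd hP).2
  set u : Fin d → ℂ := ⇑(hP.eigenvectorBasis iM) with hu_def
  set v : Fin d → ℂ := ⇑(hP.eigenvectorBasis im) with hv_def
  have huu : star u ⬝ᵥ u = 1 := by simpa using ortho_dot hP iM iM
  have hvv : star v ⬝ᵥ v = 1 := by simpa using ortho_dot hP im im
  have hu : star u ⬝ᵥ (P *ᵥ u) = ((lamMax P : ℝ) : ℂ) := by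
    rw [hu_def, hP.mulVec_eigenvectorBasis, dotProduct_smul, ← hu_def, huu, hiM]
    simp [Complex.real_smul]
  have hv : star v ⬝ᵥ (P *ᵥ v) = ((lamMin P : ℝ) : ℂ) := by
    rw [hv_def, hP.mulVec_eigenvectorBasis, dotProduct_smul, ← hv_def, hvv, him]
    simp [Complex.real_smul]
  have hqM : ∀ i, hQ.eigenvalues i ≤ lamMax P := by
    intro i; rw [hM]; exact (lamMax_spec hd hQ).1 i
  have hqm : ∀ i, lamMin P ≤ hQ.eigenvalues i := by
    intro i; rw [hm]; exact (lamMin_spec hd hQ).1 i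
  have hmM : lamMin P ≤ lamMax P := by
    calc lamMin P ≤ hP.eigenvalues iM := (lamMin_spec hd hP).1 iM
    _ = lamMax P := hiM
  by_cases hMm : lamMax P = lamMin P
  · refine build hQ u v huu hvv (lamMax P) (lamMin P) hu hv (fun _ => 1)
      (fun _ => zero_le_one) (fun _ => le_refl 1) ?_
    intro i
    have h1 := hqM i
    have h2 := hqm i
    rw [hMm] at h1
    have : hQ.eigenvalues i = lamMin P := le_antisymm h1 h2
    rw [this, hMm]; ring
  · have hlt : lamMin P < lamMax P := lt_of_le_of_ne hmM (fun h => hMm h.symm)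
    have hne : lamMax P - lamMin P ≠ 0 := by linarith
    refine build hQ u v huu hvv (lamMax P) (lamMin P) hu hv
      (fun i => (hQ.eigenvalues i - lamMin P) / (lamMax P - lamMin P)) ?_ ?_ ?_
    · intro i
      apply div_nonneg <;> linarith [hqm i]
    · intro i
      rw [div_le_one (by linarith)]
      linarith [hqM i]
    · intro i
      field_simp
      ring

end CleanPovmAux

open CleanPovmAux in
/-- two effects are pre-processing equivalent iff their extreme
eigenvalues agree. -/
theorem clean_povm_stmt9 (d : ℕ) (hd : 1 ≤ d) (P Q : Matrix (Fin d) (Fin d) ℂ)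
    (hP0 : P.PosSemidef) (hP1 : ((1 : Matrix (Fin d) (Fin d) ℂ) - P).PosSemidef)
    (hQ0 : Q.PosSemidef) (hQ1 : ((1 : Matrix (Fin d) (Fin d) ℂ) - Q).PosSemidef) :
    ((∃ (n : ℕ) (A : Fin n → Matrix (Fin d) (Fin d) ℂ),
        ∑ k, (A k)ᴴ * A k = 1 ∧ ∑ k, (A k)ᴴ * P * A k = Q) ∧
     (∃ (m : ℕ) (B : Fin m → Matrix (Fin d) (Fin d) ℂ),
        ∑ l, (B l)ᴴ * B l = 1 ∧ ∑ l, (B l)ᴴ * Q * B l = P)) ↔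
      lamMax P = lamMax Q ∧ lamMin P = lamMin Q := by
  have hd' : 0 < d := hd
  constructor
  · rintro ⟨⟨n, A, hA1, hA2⟩, ⟨m, B, hB1, hB2⟩⟩
    constructor
    · unfold lamMax
      congr 1
      ext c
      simp only [Set.mem_setOf_eq]
      constructor
      · intro h
        rw [← channel_conj hA1 hA2 (c:ℂ)]
        exact psd_sum A h
      · intro h
        rw [← channel_conj hB1 hB2 (c:ℂ)]
        exact psd_sum B h
    · unfold lamMin
      congr 1
      ext c
      simp only [Set.mem_setOf_eq]
      constructor
      · intro h
        rw [← channel_conj' hA1 hA2 (c:ℂ)]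
        exact psd_sum A h
      · intro h
        rw [← channel_conj' hB1 hB2 (c:ℂ)]
        exact psd_sum B h
  · rintro ⟨h1, h2⟩
    exact ⟨exists_channel hd' hP0.1 hQ0.1 h1 h2,
      exists_channel hd' hQ0.1 hP0.1 h1.symm h2.symm⟩
end

section
/- For two-level quantum systems, cleanness equivalence coincides with unitary equivalence: if P and Q are POVMs on ℂ² with the same finite outcome set, then P ≃ Q if and only if there exists a 2×2 unitary matrix U with Q_e = U P_e Uᴴ for every outcome e. -/
open Matrix BigOperators
open scoped ComplexOrder

private def σ2 : Matrix (Fin 2) (Fin 2) ℂ := !![0,1;1,0]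

lemma sigma_unitary : σ2ᴴ * σ2 = 1 := by
  ext i j
  fin_cases i <;> fin_cases j <;> simp [σ2, mul_apply, Fin.sum_univ_two]

lemma sigma_conj (x y : ℂ) : σ2ᴴ * (diagonal ![x,y]) * σ2 = diagonal ![y,x] := by
  ext i j
  fin_cases i <;> fin_cases j <;>
    simp [σ2, mul_apply, Fin.sum_univ_two, diagonal]

lemma diag2 (M : Matrix (Fin 2) (Fin 2) ℂ) (hM : M.IsHermitian) :
    ∃ (V : Matrix (Fin 2) (Fin 2) ℂ) (a b : ℝ), Vᴴ * V = 1 ∧ b ≤ a ∧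
      Vᴴ * M * V = diagonal ![(a:ℂ), (b:ℂ)] := by
  obtain ⟨U, a, b, hU, hU', hspec0⟩ :
      ∃ (U : Matrix (Fin 2) (Fin 2) ℂ) (a b : ℝ), Uᴴ * U = 1 ∧ U * Uᴴ = 1 ∧
        M = U * diagonal ![(a:ℂ), (b:ℂ)] * Uᴴ := by
    refine ⟨(hM.eigenvectorUnitary : Matrix (Fin 2) (Fin 2) ℂ),
      hM.eigenvalues 0, hM.eigenvalues 1, ?_, ?_, ?_⟩
    · simpa [Matrix.star_eq_conjTranspose] using
        Matrix.mem_unitaryGroup_iff'.mp hM.eigenvectorUnitary.2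
    · simpa [Matrix.star_eq_conjTranspose] using
        Matrix.mem_unitaryGroup_iff.mp hM.eigenvectorUnitary.2
    · have hd : (RCLike.ofReal ∘ hM.eigenvalues : Fin 2 → ℂ)
          = ![(hM.eigenvalues 0 : ℂ), (hM.eigenvalues 1 : ℂ)] := by
        funext i; fin_cases i <;> simp
      have := hM.spectral_theorem
      rw [hd] at this
      simpa [Matrix.star_eq_conjTranspose] using this
  have hspec : Uᴴ * M * U = diagonal ![(a:ℂ), (b:ℂ)] := by
    rw [hspec0]
    calc Uᴴ * (U * diagonal ![(a:ℂ), (b:ℂ)] * Uᴴ) * U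
        = (Uᴴ * U) * diagonal ![(a:ℂ), (b:ℂ)] * (Uᴴ * U) := by
          simp only [mul_assoc]
      _ = diagonal ![(a:ℂ), (b:ℂ)] := by rw [hU]; simp
  rcases le_total b a with h | h
  · exact ⟨U, a, b, hU, h, hspec⟩
  · refine ⟨U * σ2, b, a, ?_, h, ?_⟩
    · calc (U * σ2)ᴴ * (U * σ2) = σ2ᴴ * (Uᴴ * U) * σ2 := by
            rw [conjTranspose_mul]; simp only [mul_assoc]
        _ = 1 := by rw [hU, mul_one, sigma_unitary]
    · calc (U * σ2)ᴴ * M * (U * σ2) = σ2ᴴ * (Uᴴ * M * U) * σ2 := by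
            rw [conjTranspose_mul]; simp only [mul_assoc]
        _ = diagonal ![(b:ℂ), (a:ℂ)] := by rw [hspec, sigma_conj]

lemma cleaner_conj {E : Type} [Fintype E] {P Q : E → Matrix (Fin 2) (Fin 2) ℂ}
    (h : Cleaner P Q) (V W : Matrix (Fin 2) (Fin 2) ℂ)
    (hV : Vᴴ * V = 1) (hW : Wᴴ * W = 1) :
    Cleaner (fun e => Vᴴ * P e * V) (fun e => Wᴴ * Q e * W) := by
  obtain ⟨n, A, h1, h2⟩ := h
  have hV' : V * Vᴴ = 1 := mul_eq_one_comm.mp hV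
  refine ⟨n, fun k => Vᴴ * A k * W, ?_, ?_⟩
  · have : ∀ k, (Vᴴ * A k * W)ᴴ * (Vᴴ * A k * W) = Wᴴ * ((A k)ᴴ * A k) * W := by
      intro k
      simp only [conjTranspose_mul, conjTranspose_conjTranspose]
      calc Wᴴ * ((A k)ᴴ * V) * (Vᴴ * A k * W) = Wᴴ * ((A k)ᴴ * ((V * Vᴴ) * A k)) * W := by
            simp only [mul_assoc]
        _ = Wᴴ * ((A k)ᴴ * A k) * W := by rw [hV']; simp [mul_assoc]
    rw [Finset.sum_congr rfl (fun k _ => this k), ← Finset.sum_mul, ← Matrix.mul_sum, h1,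
      mul_one, hW]
  · intro e
    have : ∀ k, (Vᴴ * A k * W)ᴴ * (Vᴴ * P e * V) * (Vᴴ * A k * W)
        = Wᴴ * ((A k)ᴴ * P e * A k) * W := by
      intro k
      simp only [conjTranspose_mul, conjTranspose_conjTranspose]
      calc Wᴴ * ((A k)ᴴ * V) * (Vᴴ * P e * V) * (Vᴴ * A k * W)
          = Wᴴ * ((A k)ᴴ * ((V * Vᴴ) * (P e * ((V * Vᴴ) * A k)))) * W := by
            simp only [mul_assoc]
        _ = Wᴴ * ((A k)ᴴ * P e * A k) * W := by rw [hV']; simp [mul_assoc]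
    rw [Finset.sum_congr rfl (fun k _ => this k), ← Finset.sum_mul, ← Matrix.mul_sum, h2]

lemma key_diag {n : ℕ} (A : Fin n → Matrix (Fin 2) (Fin 2) ℂ) (x y : ℂ) (i j : Fin 2) :
    (∑ k, (A k)ᴴ * diagonal ![x, y] * A k) i j
      = x * ∑ k, (starRingEnd ℂ) (A k 0 i) * A k 0 j
        + y * ∑ k, (starRingEnd ℂ) (A k 1 i) * A k 1 j := by
  have h : ∀ k, ((A k)ᴴ * diagonal ![x, y] * A k) i j
      = x * ((starRingEnd ℂ) (A k 0 i) * A k 0 j)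
        + y * ((starRingEnd ℂ) (A k 1 i) * A k 1 j) := by
    intro k
    simp [mul_apply, Fin.sum_univ_two, conjTranspose_apply, diagonal]
    ring
  rw [Matrix.sum_apply, Finset.sum_congr rfl (fun k _ => h k), Finset.sum_add_distrib,
    ← Finset.mul_sum, ← Finset.mul_sum]

lemma key_one {n : ℕ} (A : Fin n → Matrix (Fin 2) (Fin 2) ℂ) (i j : Fin 2) :
    (∑ k, (A k)ᴴ * A k) i j
      = ∑ k, (starRingEnd ℂ) (A k 0 i) * A k 0 j
        + ∑ k, (starRingEnd ℂ) (A k 1 i) * A k 1 j := by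
  have h : ∀ k, ((A k)ᴴ * A k) i j
      = (starRingEnd ℂ) (A k 0 i) * A k 0 j + (starRingEnd ℂ) (A k 1 i) * A k 1 j := by
    intro k
    simp [mul_apply, Fin.sum_univ_two, conjTranspose_apply]
  rw [Matrix.sum_apply, Finset.sum_congr rfl (fun k _ => h k), Finset.sum_add_distrib]

lemma key_diagA {n : ℕ} (A : Fin n → Matrix (Fin 2) (Fin 2) ℂ)
    (h10 : ∀ k, A k 1 0 = 0) (h01 : ∀ k, A k 0 1 = 0)
    (M : Matrix (Fin 2) (Fin 2) ℂ) (i j : Fin 2) :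
    (∑ k, (A k)ᴴ * M * A k) i j = M i j * ∑ k, (starRingEnd ℂ) (A k i i) * A k j j := by
  have h : ∀ k, ((A k)ᴴ * M * A k) i j
      = M i j * ((starRingEnd ℂ) (A k i i) * A k j j) := by
    intro k
    fin_cases i <;> fin_cases j <;>
      · simp [mul_apply, Fin.sum_univ_two, conjTranspose_apply, h10 k, h01 k]
        ring
  rw [Matrix.sum_apply, Finset.sum_congr rfl (fun k _ => h k), ← Finset.mul_sum]

lemma sum_conj_mul_self_eq {n : ℕ} (c : Fin n → ℂ) :
    ∑ k, (starRingEnd ℂ) (c k) * c k = ((∑ k, Complex.normSq (c k) : ℝ) : ℂ) := by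
  rw [Complex.ofReal_sum]
  exact Finset.sum_congr rfl fun k _ => (Complex.normSq_eq_conj_mul_self).symm

lemma abs_sum_conj_mul_le {N : ℕ} (c d : Fin N → ℂ)
    (hc : ∑ k, Complex.normSq (c k) = 1) (hd : ∑ k, Complex.normSq (d k) = 1) :
    ‖∑ k, (starRingEnd ℂ) (c k) * d k‖ ≤ 1 := by
  have h1 : ‖∑ k, (starRingEnd ℂ) (c k) * d k‖
      ≤ ∑ k, ‖c k‖ * ‖d k‖ := by
    refine (norm_sum_le _ _).trans_eq ?_
    exact Finset.sum_congr rfl fun k _ => by rw [norm_mul, Complex.norm_conj]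
  have h2 : (∑ k, ‖c k‖ * ‖d k‖) ^ 2
      ≤ (∑ k, ‖c k‖ ^ 2) * ∑ k, ‖d k‖ ^ 2 :=
    Finset.sum_mul_sq_le_sq_mul_sq _ _ _
  have hc' : ∑ k, ‖c k‖ ^ 2 = 1 := by
    rw [← hc]; exact Finset.sum_congr rfl fun k _ => Complex.sq_norm _
  have hd' : ∑ k, ‖d k‖ ^ 2 = 1 := by
    rw [← hd]; exact Finset.sum_congr rfl fun k _ => Complex.sq_norm _
  rw [hc', hd', mul_one] at h2
  have h3 : 0 ≤ ∑ k, ‖c k‖ * ‖d k‖ :=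
    Finset.sum_nonneg fun k _ => mul_nonneg (norm_nonneg _) (norm_nonneg _)
  have h4 : ∑ k, ‖c k‖ * ‖d k‖ ≤ 1 := by
    by_contra hlt
    push_neg at hlt
    have h5 : (1:ℝ) * 1 < (∑ k, ‖c k‖ * ‖d k‖)
        * (∑ k, ‖c k‖ * ‖d k‖) :=
      mul_lt_mul'' hlt hlt (by norm_num) (by norm_num)
    rw [sq] at h2
    linarith
  exact h1.trans h4

lemma core {E : Type} [Fintype E] (P Q : E → Matrix (Fin 2) (Fin 2) ℂ)
    (hPherm : ∀ e, (P e).IsHermitian) (e₀ : E) (a b a' b' : ℝ)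
    (hab : b < a) (hab' : b' ≤ a')
    (hP0 : P e₀ = diagonal ![(a:ℂ), (b:ℂ)]) (hQ0 : Q e₀ = diagonal ![(a':ℂ), (b':ℂ)])
    (h1 : Cleaner P Q) (h2 : Cleaner Q P) :
    ∃ U : Matrix (Fin 2) (Fin 2) ℂ, Uᴴ * U = 1 ∧ ∀ e, Q e = U * P e * Uᴴ := by
  obtain ⟨n, A, hA1, hA2⟩ := h1
  obtain ⟨m, B, hB1, hB2⟩ := h2
  set s := ∑ k, Complex.normSq (A k 1 0) with hs_def
  set t := ∑ k, Complex.normSq (A k 0 1) with ht_def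
  set u := ∑ k, Complex.normSq (B k 1 0) with hu_def
  set w := ∑ k, Complex.normSq (B k 0 1) with hw_def
  set cA := ∑ k, Complex.normSq (A k 0 0) with hcA_def
  set dA := ∑ k, Complex.normSq (A k 1 1) with hdA_def
  set cB := ∑ k, Complex.normSq (B k 0 0) with hcB_def
  set dB := ∑ k, Complex.normSq (B k 1 1) with hdB_def
  have hs0 : 0 ≤ s := Finset.sum_nonneg fun k _ => Complex.normSq_nonneg _
  have ht0 : 0 ≤ t := Finset.sum_nonneg fun k _ => Complex.normSq_nonneg _
  have hu0 : 0 ≤ u := Finset.sum_nonneg fun k _ => Complex.normSq_nonneg _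
  have hw0 : 0 ≤ w := Finset.sum_nonneg fun k _ => Complex.normSq_nonneg _
  -- unitality entries
  have hE1 : cA + s = 1 := by
    have h := congrFun (congrFun hA1 0) 0
    rw [key_one, sum_conj_mul_self_eq, sum_conj_mul_self_eq] at h
    simp only [Matrix.one_apply_eq] at h
    exact_mod_cast h
  have hE2 : t + dA = 1 := by
    have h := congrFun (congrFun hA1 1) 1
    rw [key_one, sum_conj_mul_self_eq, sum_conj_mul_self_eq] at h
    simp only [Matrix.one_apply_eq] at h
    exact_mod_cast h
  have hE5 : cB + u = 1 := by
    have h := congrFun (congrFun hB1 0) 0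
    rw [key_one, sum_conj_mul_self_eq, sum_conj_mul_self_eq] at h
    simp only [Matrix.one_apply_eq] at h
    exact_mod_cast h
  have hE6 : w + dB = 1 := by
    have h := congrFun (congrFun hB1 1) 1
    rw [key_one, sum_conj_mul_self_eq, sum_conj_mul_self_eq] at h
    simp only [Matrix.one_apply_eq] at h
    exact_mod_cast h
  -- channel entries at e₀
  have hE3 : a * cA + b * s = a' := by
    have h := congrFun (congrFun (hA2 e₀) 0) 0
    rw [hP0, hQ0, key_diag, sum_conj_mul_self_eq, sum_conj_mul_self_eq] at h
    simp only [diagonal_apply_eq] at h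
    have h' : ((a * cA + b * s : ℝ) : ℂ) = ((a' : ℝ) : ℂ) := by
      push_cast
      convert h using 2 <;> simp
    exact_mod_cast h'
  have hE4 : a * t + b * dA = b' := by
    have h := congrFun (congrFun (hA2 e₀) 1) 1
    rw [hP0, hQ0, key_diag, sum_conj_mul_self_eq, sum_conj_mul_self_eq] at h
    simp only [diagonal_apply_eq] at h
    have h' : ((a * t + b * dA : ℝ) : ℂ) = ((b' : ℝ) : ℂ) := by
      push_cast
      convert h using 2 <;> simp
    exact_mod_cast h'
  have hE7 : a' * cB + b' * u = a := by
    have h := congrFun (congrFun (hB2 e₀) 0) 0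
    rw [hP0, hQ0, key_diag, sum_conj_mul_self_eq, sum_conj_mul_self_eq] at h
    simp only [diagonal_apply_eq] at h
    have h' : ((a' * cB + b' * u : ℝ) : ℂ) = ((a : ℝ) : ℂ) := by
      push_cast
      convert h using 2 <;> simp
    exact_mod_cast h'
  have hE8 : a' * w + b' * dB = b := by
    have h := congrFun (congrFun (hB2 e₀) 1) 1
    rw [hP0, hQ0, key_diag, sum_conj_mul_self_eq, sum_conj_mul_self_eq] at h
    simp only [diagonal_apply_eq] at h
    have h' : ((a' * w + b' * dB : ℝ) : ℂ) = ((b : ℝ) : ℂ) := by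
      push_cast
      convert h using 2 <;> simp
    exact_mod_cast h'
  -- solve the real linear system
  have e3 : a' = a - (a - b) * s := by linear_combination a * hE1 - hE3
  have e4 : b' = b + (a - b) * t := by linear_combination b * hE2 - hE4
  have e7 : a = a' - (a' - b') * u := by linear_combination a' * hE5 - hE7
  have e8 : b = b' + (a' - b') * w := by linear_combination b' * hE6 - hE8
  have p1 : 0 ≤ (a - b) * s := mul_nonneg (by linarith) hs0
  have p2 : 0 ≤ (a' - b') * u := mul_nonneg (by linarith) hu0
  have p3 : 0 ≤ (a - b) * t := mul_nonneg (by linarith) ht0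
  have p4 : 0 ≤ (a' - b') * w := mul_nonneg (by linarith) hw0
  have hsz : s = 0 := by
    have h0 : (a - b) * s = 0 := by linarith
    rcases mul_eq_zero.mp h0 with h | h
    · exact absurd h (by linarith)
    · exact h
  have htz : t = 0 := by
    have h0 : (a - b) * t = 0 := by linarith
    rcases mul_eq_zero.mp h0 with h | h
    · exact absurd h (by linarith)
    · exact h
  have haa : a' = a := by rw [e3, hsz]; ring
  have hbb : b' = b := by rw [e4, htz]; ring
  have huz : u = 0 := by
    have h0 : (a' - b') * u = 0 := by linarith
    rcases mul_eq_zero.mp h0 with h | h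
    · exact absurd h (by rw [haa, hbb]; intro hc; linarith [sub_eq_zero.mp hc])
    · exact h
  have hwz : w = 0 := by
    have h0 : (a' - b') * w = 0 := by linarith
    rcases mul_eq_zero.mp h0 with h | h
    · exact absurd h (by rw [haa, hbb]; intro hc; linarith [sub_eq_zero.mp hc])
    · exact h
  have hcA1 : cA = 1 := by linarith
  have hdA1 : dA = 1 := by linarith
  have hcB1 : cB = 1 := by linarith
  have hdB1 : dB = 1 := by linarith
  -- all Kraus operators are diagonal
  have hA10 : ∀ k, A k 1 0 = 0 := by
    intro k
    have hz : ∑ k, Complex.normSq (A k 1 0) = 0 := by rw [← hs_def]; exact hsz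
    exact Complex.normSq_eq_zero.mp
      ((Finset.sum_eq_zero_iff_of_nonneg fun k _ => Complex.normSq_nonneg _).mp hz k
        (Finset.mem_univ k))
  have hA01 : ∀ k, A k 0 1 = 0 := by
    intro k
    have hz : ∑ k, Complex.normSq (A k 0 1) = 0 := by rw [← ht_def]; exact htz
    exact Complex.normSq_eq_zero.mp
      ((Finset.sum_eq_zero_iff_of_nonneg fun k _ => Complex.normSq_nonneg _).mp hz k
        (Finset.mem_univ k))
  have hB10 : ∀ k, B k 1 0 = 0 := by
    intro k
    have hz : ∑ k, Complex.normSq (B k 1 0) = 0 := by rw [← hu_def]; exact huz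
    exact Complex.normSq_eq_zero.mp
      ((Finset.sum_eq_zero_iff_of_nonneg fun k _ => Complex.normSq_nonneg _).mp hz k
        (Finset.mem_univ k))
  have hB01 : ∀ k, B k 0 1 = 0 := by
    intro k
    have hz : ∑ k, Complex.normSq (B k 0 1) = 0 := by rw [← hw_def]; exact hwz
    exact Complex.normSq_eq_zero.mp
      ((Finset.sum_eq_zero_iff_of_nonneg fun k _ => Complex.normSq_nonneg _).mp hz k
        (Finset.mem_univ k))
  -- entrywise action of the channels
  set γ := ∑ k, (starRingEnd ℂ) (A k 0 0) * A k 1 1 with hγ_def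
  set δ := ∑ k, (starRingEnd ℂ) (B k 0 0) * B k 1 1 with hδ_def
  have hq : ∀ f (i j : Fin 2),
      Q f i j = P f i j * ∑ k, (starRingEnd ℂ) (A k i i) * A k j j := by
    intro f i j
    rw [← hA2 f, key_diagA A hA10 hA01]
  have hp : ∀ f (i j : Fin 2),
      P f i j = Q f i j * ∑ k, (starRingEnd ℂ) (B k i i) * B k j j := by
    intro f i j
    rw [← hB2 f, key_diagA B hB10 hB01]
  have hq00 : ∀ f, Q f 0 0 = P f 0 0 := by
    intro f
    rw [hq f 0 0, sum_conj_mul_self_eq, ← hcA_def, hcA1]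
    simp
  have hq11 : ∀ f, Q f 1 1 = P f 1 1 := by
    intro f
    rw [hq f 1 1, sum_conj_mul_self_eq, ← hdA_def, hdA1]
    simp
  have hq01 : ∀ f, Q f 0 1 = P f 0 1 * γ := fun f => hq f 0 1
  have hq10 : ∀ f, Q f 1 0 = P f 1 0 * (starRingEnd ℂ) γ := by
    intro f
    rw [hq f 1 0, hγ_def, map_sum]
    congr 1
    exact Finset.sum_congr rfl fun k _ => by rw [_root_.map_mul, Complex.conj_conj, mul_comm]
  have hp01 : ∀ f, P f 0 1 = Q f 0 1 * δ := fun f => hp f 0 1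
  by_cases hoff : ∀ f, P f 0 1 = 0
  · -- all effects diagonal: P = Q
    refine ⟨1, by simp, fun e => ?_⟩
    have h10 : P e 1 0 = 0 := by
      have hh := congrFun (congrFun (hPherm e) 1) 0
      rw [conjTranspose_apply] at hh
      rw [← hh, hoff e, star_zero]
    have hQP : Q e = P e := by
      ext i j
      fin_cases i <;> fin_cases j
      · exact hq00 e
      · exact (hq01 e).trans (by rw [hoff e, zero_mul]; exact (hoff e).symm)
      · exact (hq10 e).trans (by rw [h10, zero_mul]; exact h10.symm)
      · exact hq11 e
    rw [hQP]
    simp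
  · push_neg at hoff
    obtain ⟨f₀, hf₀⟩ := hoff
    have hγδ : γ * δ = 1 := by
      have h := hp01 f₀
      rw [hq01 f₀] at h
      have h2 : P f₀ 0 1 * (γ * δ) = P f₀ 0 1 * 1 := by
        rw [mul_one]; linear_combination -h
      exact mul_left_cancel₀ hf₀ h2
    have hγle : ‖γ‖ ≤ 1 := by
      refine abs_sum_conj_mul_le _ _ ?_ ?_
      · rw [← hcA_def]; exact hcA1
      · rw [← hdA_def]; exact hdA1
    have hδle : ‖δ‖ ≤ 1 := by
      refine abs_sum_conj_mul_le _ _ ?_ ?_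
      · rw [← hcB_def]; exact hcB1
      · rw [← hdB_def]; exact hdB1
    have hγ1 : ‖γ‖ = 1 := by
      have h := congrArg (‖·‖) hγδ
      rw [norm_mul, norm_one] at h
      have h2 : ‖γ‖ * ‖δ‖ ≤ ‖γ‖ * 1 :=
        mul_le_mul_of_nonneg_left hδle (norm_nonneg γ)
      rw [mul_one] at h2
      linarith
    have hγc : γ * (starRingEnd ℂ) γ = 1 := by
      rw [Complex.mul_conj, ← Complex.sq_norm, hγ1]
      norm_num
    refine ⟨!![1, 0; 0, (starRingEnd ℂ) γ], ?_, ?_⟩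
    · have hUH : (!![1, 0; 0, (starRingEnd ℂ) γ] : Matrix (Fin 2) (Fin 2) ℂ)ᴴ
          = !![1, 0; 0, γ] := by
        ext i j
        fin_cases i <;> fin_cases j <;> simp [conjTranspose_apply]
      rw [hUH, Matrix.mul_fin_two]
      ext i j
      fin_cases i <;> fin_cases j <;> simp
      linear_combination hγc
    · intro e
      have hUH : (!![1, 0; 0, (starRingEnd ℂ) γ] : Matrix (Fin 2) (Fin 2) ℂ)ᴴ
          = !![1, 0; 0, γ] := by
        ext i j
        fin_cases i <;> fin_cases j <;> simp [conjTranspose_apply]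
      have hQe : Q e = !![P e 0 0, P e 0 1 * γ; P e 1 0 * (starRingEnd ℂ) γ, P e 1 1] := by
        rw [Matrix.eta_fin_two (Q e), hq00 e, hq01 e, hq10 e, hq11 e]
      rw [hQe, hUH, Matrix.eta_fin_two (P e), Matrix.mul_fin_two, Matrix.mul_fin_two]
      ext i j
      fin_cases i <;> fin_cases j <;> simp
      all_goals first
        | ring1
        | linear_combination (-(P e 1 1)) * hγc
        | linear_combination P e 1 1 * hγc

/-- for two-level systems (`d = 2`), cleanness equivalence coincides
with unitary equivalence. -/
theorem clean_povm_stmt10 (E : Type) [Fintype E]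
    (P Q : E → Matrix (Fin 2) (Fin 2) ℂ) (hP : IsPOVM P) (hQ : IsPOVM Q) :
    (Cleaner P Q ∧ Cleaner Q P) ↔
      ∃ U : Matrix (Fin 2) (Fin 2) ℂ, Uᴴ * U = 1 ∧ ∀ e, Q e = U * P e * Uᴴ := by
  constructor
  · rintro ⟨h1, h2⟩
    by_cases hsc : ∀ e, ∃ c : ℂ, P e = c • 1
    · refine ⟨1, by simp, fun e => ?_⟩
      obtain ⟨n, A, hA1, hA2⟩ := h1
      obtain ⟨c, hc⟩ := hsc e
      have hQP : Q e = P e := by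
        rw [← hA2 e, hc]
        have hterm : ∀ k, (A k)ᴴ * (c • (1 : Matrix (Fin 2) (Fin 2) ℂ)) * A k
            = c • ((A k)ᴴ * A k) := by
          intro k
          rw [Matrix.mul_smul, Matrix.smul_mul, mul_one]
        rw [Finset.sum_congr rfl fun k _ => hterm k, ← Finset.smul_sum, hA1]
      rw [hQP]
      simp
    · push_neg at hsc
      obtain ⟨e₀, he₀⟩ := hsc
      obtain ⟨V, a, b, hV, hba, hPD⟩ := diag2 (P e₀) (hP.1 e₀).1
      obtain ⟨W, a', b', hW, hba', hQD⟩ := diag2 (Q e₀) (hQ.1 e₀).1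
      have hVV : V * Vᴴ = 1 := mul_eq_one_comm.mp hV
      have hWW : W * Wᴴ = 1 := mul_eq_one_comm.mp hW
      have hPe₀ : P e₀ = V * diagonal ![(a:ℂ), (b:ℂ)] * Vᴴ := by
        rw [← hPD]
        calc P e₀ = (V * Vᴴ) * P e₀ * (V * Vᴴ) := by rw [hVV]; simp
          _ = V * (Vᴴ * P e₀ * V) * Vᴴ := by simp only [mul_assoc]
      have hblta : b < a := by
        rcases lt_or_eq_of_le hba with h | h
        · exact h
        · exfalso
          apply he₀ ((a : ℂ))
          have hdd : diagonal ![(a:ℂ), (b:ℂ)] = (a : ℂ) • 1 := by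
            rw [← h]
            ext i j
            fin_cases i <;> fin_cases j <;> simp [diagonal, Matrix.one_apply]
          rw [hPe₀, hdd, Matrix.mul_smul, Matrix.smul_mul, mul_one, hVV]
      have hP'herm : ∀ e, (Vᴴ * P e * V).IsHermitian := by
        intro e
        have hh : (P e)ᴴ = P e := (hP.1 e).1
        show (Vᴴ * P e * V)ᴴ = Vᴴ * P e * V
        rw [conjTranspose_mul, conjTranspose_mul, conjTranspose_conjTranspose, hh, mul_assoc]
      have hc1 : Cleaner (fun e => Vᴴ * P e * V) (fun e => Wᴴ * Q e * W) :=
        cleaner_conj h1 V W hV hW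
      have hc2 : Cleaner (fun e => Wᴴ * Q e * W) (fun e => Vᴴ * P e * V) :=
        cleaner_conj h2 W V hW hV
      obtain ⟨U, hU, hUc⟩ := core (fun e => Vᴴ * P e * V) (fun e => Wᴴ * Q e * W)
        hP'herm e₀ a b a' b' hblta hba' hPD hQD hc1 hc2
      refine ⟨W * U * Vᴴ, ?_, ?_⟩
      · calc (W * U * Vᴴ)ᴴ * (W * U * Vᴴ)
            = V * (Uᴴ * (Wᴴ * W) * U) * Vᴴ := by
              simp only [conjTranspose_mul, conjTranspose_conjTranspose, mul_assoc]
          _ = 1 := by rw [hW, mul_one, hU, mul_one, hVV]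
      · intro e
        have hQe : Q e = W * (Wᴴ * Q e * W) * Wᴴ := by
          calc Q e = (W * Wᴴ) * Q e * (W * Wᴴ) := by rw [hWW]; simp
            _ = W * (Wᴴ * Q e * W) * Wᴴ := by simp only [mul_assoc]
        rw [hQe, hUc e]
        calc W * (U * (Vᴴ * P e * V) * Uᴴ) * Wᴴ
            = (W * U * Vᴴ) * P e * (V * Uᴴ * Wᴴ) := by simp only [mul_assoc]
          _ = (W * U * Vᴴ) * P e * (W * U * Vᴴ)ᴴ := by
              simp only [conjTranspose_mul, conjTranspose_conjTranspose, mul_assoc]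
  · rintro ⟨U, hU, hUc⟩
    have hUU : U * Uᴴ = 1 := mul_eq_one_comm.mp hU
    constructor
    · refine ⟨1, fun _ => Uᴴ, ?_, fun e => ?_⟩
      · rw [Fin.sum_univ_one, conjTranspose_conjTranspose, hUU]
      · rw [Fin.sum_univ_one, conjTranspose_conjTranspose, ← hUc e]
    · refine ⟨1, fun _ => U, ?_, fun e => ?_⟩
      · rw [Fin.sum_univ_one, hU]
      · rw [Fin.sum_univ_one, hUc e]
        calc Uᴴ * (U * P e * Uᴴ) * U = (Uᴴ * U) * P e * (Uᴴ * U) := by simp only [mul_assoc]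
          _ = P e := by rw [hU]; simp
end

section
/- Let P be a POVM on ℂ^d whose finite outcome set has cardinality n with n ≤ d. Then P is clean if and only if λ_M(P_e) = 1 for every outcome e, i.e. if and only if for every e there exists a unit vector u ∈ ℂ^d with P_e u = u. -/
open Matrix BigOperators
open scoped ComplexOrder

/-- A POVM is clean if every POVM (with the same outcome set) that can be
pre-processed into it can also be obtained back from it by pre-processing. -/
def Clean {d : ℕ} {E : Type} [Fintype E] (P : E → Matrix (Fin d) (Fin d) ℂ) : Prop :=
  ∀ Q : E → Matrix (Fin d) (Fin d) ℂ, IsPOVM Q → Cleaner Q P → Cleaner P Q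

section Aux

variable {d : ℕ} {E : Type} [Fintype E]

lemma kraus_vecMulVec (u r : Fin d → ℂ) (X : Matrix (Fin d) (Fin d) ℂ) :
    (vecMulVec u r)ᴴ * X * vecMulVec u r
      = (star u ⬝ᵥ X *ᵥ u) • vecMulVec (star r) r := by
  ext i j
  simp only [mul_apply, conjTranspose_apply, vecMulVec_apply, Matrix.smul_apply, smul_eq_mul,
    dotProduct, mulVec, Pi.star_apply, star_mul', Finset.sum_mul, Finset.mul_sum]
  rw [Finset.sum_comm]
  refine Finset.sum_congr rfl fun c _ => Finset.sum_congr rfl fun b _ => ?_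
  ring

lemma sum_vecMulVec_rows (C : Matrix (Fin d) (Fin d) ℂ) :
    ∑ j, vecMulVec (star (C j)) (C j) = Cᴴ * C := by
  ext a b
  simp [Matrix.sum_apply, vecMulVec_apply, mul_apply, conjTranspose_apply, mul_comm]

lemma dot_sum_mulVec {ι : Type*} [Fintype ι] (M : ι → Matrix (Fin d) (Fin d) ℂ)
    (u v : Fin d → ℂ) :
    ∑ e, star u ⬝ᵥ (M e *ᵥ v) = star u ⬝ᵥ ((∑ e, M e) *ᵥ v) := by
  simp only [dotProduct, mulVec, Matrix.sum_apply, Finset.sum_mul, Finset.mul_sum]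
  rw [Finset.sum_comm]
  refine Finset.sum_congr rfl fun i _ => ?_
  exact Finset.sum_comm

lemma single_dot (M : Matrix (Fin d) (Fin d) ℂ) (i : Fin d) :
    star (Pi.single i (1:ℂ)) ⬝ᵥ (M *ᵥ Pi.single i (1:ℂ)) = M i i := by
  simp [dotProduct, mulVec, Pi.single_apply, Pi.star_apply, apply_ite (starRingEnd ℂ),
    ite_mul, mul_ite, Finset.sum_ite_eq, Finset.sum_ite_eq']

/-- Measure-and-prepare channel: if the `u f` are "dual" unit vectors for `P`,
any POVM `Q` can be reached from `P`. -/
lemma cleaner_meas_prep [DecidableEq E] (P Q : E → Matrix (Fin d) (Fin d) ℂ)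
    (hQ : ∀ f, (Q f).PosSemidef) (hQsum : ∑ f, Q f = 1)
    (u : E → Fin d → ℂ)
    (horth : ∀ e f, star (u f) ⬝ᵥ (P e *ᵥ u f) = if f = e then 1 else 0)
    (hnorm : ∀ f, star (u f) ⬝ᵥ (u f) = 1) :
    Cleaner P Q := by
  classical
  choose C hC using fun f => (by open scoped MatrixOrder in obtain ⟨B, hB⟩ := CStarAlgebra.nonneg_iff_eq_star_mul_self.mp (hQ f).nonneg; exact ⟨B, by rw [hB, star_eq_conjTranspose]⟩ : ∃ B : Matrix (Fin d) (Fin d) ℂ, Q f = Bᴴ * B)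
  set σ : Fin (Fintype.card (E × Fin d)) ≃ E × Fin d := (Fintype.equivFin (E × Fin d)).symm
  have key : ∀ X : Matrix (Fin d) (Fin d) ℂ,
      (∑ k, (vecMulVec (u (σ k).1) (C (σ k).1 (σ k).2))ᴴ * X
          * vecMulVec (u (σ k).1) (C (σ k).1 (σ k).2))
      = ∑ f, (star (u f) ⬝ᵥ (X *ᵥ u f)) • Q f := by
    intro X
    rw [Equiv.sum_comp σ (fun p : E × Fin d =>
      (vecMulVec (u p.1) (C p.1 p.2))ᴴ * X * vecMulVec (u p.1) (C p.1 p.2))]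
    rw [Fintype.sum_prod_type]
    refine Finset.sum_congr rfl fun f _ => ?_
    calc ∑ j, (vecMulVec (u f) (C f j))ᴴ * X * vecMulVec (u f) (C f j)
        = ∑ j, (star (u f) ⬝ᵥ (X *ᵥ u f)) • vecMulVec (star (C f j)) (C f j) :=
          Finset.sum_congr rfl fun j _ => kraus_vecMulVec _ _ _
      _ = (star (u f) ⬝ᵥ (X *ᵥ u f)) • ((C f)ᴴ * C f) := by
          rw [← Finset.smul_sum, sum_vecMulVec_rows]
      _ = (star (u f) ⬝ᵥ (X *ᵥ u f)) • Q f := by rw [← hC]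
  refine ⟨_, fun k => vecMulVec (u (σ k).1) (C (σ k).1 (σ k).2), ?_, ?_⟩
  · have h1 := key 1
    simp only [Matrix.mul_one, Matrix.one_mulVec, hnorm, one_smul] at h1
    rw [h1, hQsum]
  · intro e
    rw [key (P e)]
    simp only [horth, ite_smul, one_smul, zero_smul]
    simp [Finset.sum_ite_eq']

end Aux

/-- a POVM with `n ≤ d` outcomes is clean iff every element has
largest eigenvalue `1`, i.e. admits a unit eigenvector with eigenvalue `1`. -/
theorem clean_povm_stmt11 (d : ℕ) (hd : 1 ≤ d) (E : Type) [Fintype E]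
    (hcard : Fintype.card E ≤ d)
    (P : E → Matrix (Fin d) (Fin d) ℂ) (hP : IsPOVM P) :
    Clean P ↔ ∀ e, ∃ u : Fin d → ℂ,
      dotProduct (star u) u = 1 ∧ P e *ᵥ u = u := by
  classical
  constructor
  · -- clean → eigenvectors
    intro hclean e
    obtain ⟨ι⟩ : Nonempty (E ↪ Fin d) :=
      Function.Embedding.nonempty_of_card_le (by rwa [Fintype.card_fin])
    -- classification map
    set c : Fin d → E := fun i => if h : ∃ e', ι e' = i then h.choose else e with hcdef
    have hc : ∀ f, c (ι f) = f := by
      intro f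
      have hex : ∃ e', ι e' = ι f := ⟨f, rfl⟩
      simp only [hcdef, dif_pos hex]
      exact ι.injective hex.choose_spec
    set Q : E → Matrix (Fin d) (Fin d) ℂ :=
      fun e' => diagonal (fun i => if c i = e' then (1:ℂ) else 0) with hQdef
    have hQpsd : ∀ e', (Q e').PosSemidef := by
      intro e'
      refine posSemidef_diagonal_iff.mpr fun i => ?_
      split <;> simp
    have hQsum : ∑ e', Q e' = 1 := by
      ext i j
      rcases eq_or_ne i j with rfl | hij
      · simp [hQdef, Matrix.sum_apply, diagonal_apply_eq, Finset.sum_ite_eq']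
      · simp [hQdef, Matrix.sum_apply, diagonal_apply_ne _ hij, one_apply_ne hij]
    set v : E → Fin d → ℂ := fun f => Pi.single (ι f) (1:ℂ) with hvdef
    have hnorm : ∀ f, star (v f) ⬝ᵥ (v f) = 1 := by
      intro f
      have := single_dot (1 : Matrix (Fin d) (Fin d) ℂ) (ι f)
      rwa [one_mulVec, one_apply_eq] at this
    have horthQ : ∀ e' f, star (v f) ⬝ᵥ (Q e' *ᵥ v f) = if f = e' then 1 else 0 := by
      intro e' f
      rw [hvdef, single_dot, hQdef]
      simp only [diagonal_apply_eq, hc f]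
    have hQP : Cleaner Q P := cleaner_meas_prep Q P hP.1 hP.2 v horthQ hnorm
    obtain ⟨n, B, hB1, hB2⟩ := hclean Q ⟨hQpsd, hQsum⟩ hQP
    -- the defect operator
    set M : Matrix (Fin d) (Fin d) ℂ := 1 - P e with hMdef
    have hM : M.PosSemidef := by
      have hsum : M = ∑ f ∈ Finset.univ.erase e, P f := by
        rw [hMdef, ← hP.2, ← Finset.add_sum_erase _ P (Finset.mem_univ e)]
        abel
      rw [hsum]
      exact Finset.sum_induction P _ (fun a b ha hb => ha.add hb)
        Matrix.PosSemidef.zero (fun f _ => hP.1 f)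
    have hterm : ∀ (X : Matrix (Fin d) (Fin d) ℂ) (k : Fin n),
        star (v e) ⬝ᵥ (((B k)ᴴ * X * B k) *ᵥ v e)
          = star (B k *ᵥ v e) ⬝ᵥ (X *ᵥ (B k *ᵥ v e)) := by
      intro X k
      rw [← Matrix.mulVec_mulVec, Matrix.dotProduct_mulVec, ← Matrix.vecMul_vecMul,
        ← Matrix.star_mulVec, ← Matrix.dotProduct_mulVec]
    -- sum of defect values vanishes
    have hsum3 : ∑ k, (B k)ᴴ * M * B k = 1 - Q e := by
      simp only [hMdef, Matrix.mul_sub, Matrix.sub_mul, Matrix.mul_one]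
      rw [Finset.sum_sub_distrib, hB1, hB2 e]
    have hzero : ∑ k, star (B k *ᵥ v e) ⬝ᵥ (M *ᵥ (B k *ᵥ v e)) = 0 := by
      have h1 : ∑ k, star (v e) ⬝ᵥ (((B k)ᴴ * M * B k) *ᵥ v e)
          = star (v e) ⬝ᵥ ((1 - Q e) *ᵥ v e) := by
        rw [dot_sum_mulVec (fun k => (B k)ᴴ * M * B k) (v e) (v e), hsum3]
      have h2 : star (v e) ⬝ᵥ ((1 - Q e) *ᵥ v e) = 0 := by
        rw [Matrix.sub_mulVec, dotProduct_sub, one_mulVec, hnorm e]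
        have := horthQ e e
        rw [if_pos rfl] at this
        rw [this]; ring
      calc ∑ k, star (B k *ᵥ v e) ⬝ᵥ (M *ᵥ (B k *ᵥ v e))
          = ∑ k, star (v e) ⬝ᵥ (((B k)ᴴ * M * B k) *ᵥ v e) :=
            Finset.sum_congr rfl fun k _ => (hterm M k).symm
        _ = 0 := by rw [h1, h2]
    have hnonneg : ∀ k ∈ Finset.univ, (0:ℂ) ≤ star (B k *ᵥ v e) ⬝ᵥ (M *ᵥ (B k *ᵥ v e)) :=
      fun k _ => hM.dotProduct_mulVec_nonneg _
    have heach : ∀ k, M *ᵥ (B k *ᵥ v e) = 0 := by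
      intro k
      have := (Finset.sum_eq_zero_iff_of_nonneg hnonneg).mp hzero k (Finset.mem_univ k)
      exact (hM.dotProduct_mulVec_zero_iff _).mp this
    -- some B k (v e) is nonzero
    have hone : ∑ k, star (B k *ᵥ v e) ⬝ᵥ (B k *ᵥ v e) = 1 := by
      have h1 : ∑ k, star (v e) ⬝ᵥ (((B k)ᴴ * 1 * B k) *ᵥ v e) = 1 := by
        rw [dot_sum_mulVec]
        have : ∑ k, (B k)ᴴ * 1 * B k = 1 := by
          simpa only [Matrix.mul_one] using hB1
        rw [this, one_mulVec, hnorm e]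
      rw [← h1]
      refine Finset.sum_congr rfl fun k _ => ?_
      rw [hterm 1 k, one_mulVec]
    obtain ⟨k, hk⟩ : ∃ k, star (B k *ᵥ v e) ⬝ᵥ (B k *ᵥ v e) ≠ 0 := by
      by_contra h
      push_neg at h
      rw [Finset.sum_congr rfl fun k _ => h k] at hone
      simp at hone
    set w : Fin d → ℂ := B k *ᵥ v e with hwdef
    have hPw : P e *ᵥ w = w := by
      have := heach k
      rw [hMdef, Matrix.sub_mulVec, one_mulVec, sub_eq_zero] at this
      exact this.symm
    set s : ℂ := star w ⬝ᵥ w with hsdef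
    have hs0 : 0 ≤ s := dotProduct_star_self_nonneg w
    have hsre : s = (s.re : ℂ) := by
      obtain ⟨h1, h2⟩ := Complex.le_def.mp hs0
      exact Complex.ext rfl (by simpa using h2.symm)
    have hspos : 0 < s.re := by
      rcases lt_or_eq_of_le (Complex.le_def.mp hs0).1 with h | h
      · simpa using h
      · exfalso; exact hk (by rw [hsre, ← h]; simp)
    set t : ℝ := Real.sqrt s.re with htdef
    have ht : (t:ℝ) * t = s.re := Real.mul_self_sqrt hspos.le
    have htpos : 0 < t := Real.sqrt_pos.mpr hspos
    refine ⟨((t:ℂ))⁻¹ • w, ?_, ?_⟩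
    · rw [star_smul, smul_dotProduct, dotProduct_smul, ← hsdef]
      have hstar : star ((t:ℂ))⁻¹ = ((t:ℂ))⁻¹ := by
        rw [star_inv₀, Complex.star_def, Complex.conj_ofReal]
      have htc : (t:ℂ) * (t:ℂ) = ((s.re : ℝ) : ℂ) := by exact_mod_cast ht
      have htne : (t:ℂ) ≠ 0 := by exact_mod_cast htpos.ne'
      rw [hstar, hsre, ← htc, smul_eq_mul, smul_eq_mul]
      field_simp
    · rw [mulVec_smul, hPw]
  · -- eigenvectors → clean
    intro h Q hQpovm _
    choose u hu1 hu2 using h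
    refine cleaner_meas_prep P Q hQpovm.1 hQpovm.2 u ?_ hu1
    intro e f
    rcases eq_or_ne f e with rfl | hfe
    · rw [if_pos rfl, hu2 f, hu1 f]
    · rw [if_neg hfe]
      have hsum : ∑ e', star (u f) ⬝ᵥ (P e' *ᵥ u f) = 1 := by
        rw [dot_sum_mulVec, hP.2, one_mulVec, hu1 f]
      have hnn : ∀ e' ∈ Finset.univ.erase f, (0:ℂ) ≤ star (u f) ⬝ᵥ (P e' *ᵥ u f) :=
        fun e' _ => (hP.1 e').dotProduct_mulVec_nonneg _
      have herase : ∑ e' ∈ Finset.univ.erase f, star (u f) ⬝ᵥ (P e' *ᵥ u f) = 0 := by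
        have := Finset.add_sum_erase Finset.univ
          (fun e' => star (u f) ⬝ᵥ (P e' *ᵥ u f)) (Finset.mem_univ f)
        have hff : star (u f) ⬝ᵥ (P f *ᵥ u f) = 1 := by rw [hu2 f, hu1 f]
        rw [hsum] at this
        simp only [hff] at this
        exact add_eq_left.mp this
      exact (Finset.sum_eq_zero_iff_of_nonneg hnn).mp herase e
        (Finset.mem_erase.mpr ⟨hfe.symm, Finset.mem_univ e⟩)
end

section
/- Let P be a POVM on ℂ^d whose finite outcome set has cardinality exactly d. Then P is clean if and only if P is an observable, i.e. if and only if there exists an orthonormal basis (u_e)_{e∈E} of ℂ^d such that P_e = u_e u_eᴴ for every outcome e. -/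
open Matrix BigOperators
open scoped ComplexOrder

section Helpers

variable {d : ℕ} {E : Type} [Fintype E] [DecidableEq E]

lemma vmv_mul_vmv (a b c e : Fin d → ℂ) :
    vecMulVec a b * vecMulVec c e = (b ⬝ᵥ c) • vecMulVec a e := by
  ext i j
  simp [vecMulVec_apply, mul_apply, dotProduct, Finset.sum_mul, Finset.mul_sum]
  exact Finset.sum_congr rfl fun k _ => by ring

lemma vmv_conjTranspose (a b : Fin d → ℂ) :
    (vecMulVec a b)ᴴ = vecMulVec (star b) (star a) := by
  ext i j
  simp [vecMulVec_apply, conjTranspose_apply, mul_comm]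

lemma ctms_eq_sum (B : Matrix (Fin d) (Fin d) ℂ) :
    Bᴴ * B = ∑ i, vecMulVec (star (B i)) (B i) := by
  ext p q
  rw [Matrix.sum_apply]
  simp [mul_apply, vecMulVec_apply, conjTranspose_apply]

lemma vmv_mulVec (x s y : Fin d → ℂ) : vecMulVec x s *ᵥ y = (s ⬝ᵥ y) • x := by
  ext i
  simp [mulVec, vecMulVec_apply, dotProduct, Finset.sum_mul, Finset.mul_sum]
  exact Finset.sum_congr rfl fun k _ => by ring

lemma sum_mulVec' {ι : Type*} (s : Finset ι) (M : ι → Matrix (Fin d) (Fin d) ℂ)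
    (v : Fin d → ℂ) : (∑ k ∈ s, M k) *ᵥ v = ∑ k ∈ s, M k *ᵥ v := by
  ext i
  simp [mulVec, dotProduct, Matrix.sum_apply, Finset.sum_mul]
  rw [Finset.sum_comm]

lemma dotProduct_sum' {ι : Type*} (s : Finset ι) (v : Fin d → ℂ) (w : ι → Fin d → ℂ) :
    v ⬝ᵥ (∑ k ∈ s, w k) = ∑ k ∈ s, v ⬝ᵥ w k := by
  simp [dotProduct, Finset.mul_sum, Finset.sum_apply]
  rw [Finset.sum_comm]

lemma sandwich (A M : Matrix (Fin d) (Fin d) ℂ) (x : Fin d → ℂ) :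
    star x ⬝ᵥ ((Aᴴ * M * A) *ᵥ x) = star (A *ᵥ x) ⬝ᵥ (M *ᵥ (A *ᵥ x)) := by
  rw [← mulVec_mulVec, ← mulVec_mulVec, dotProduct_mulVec, ← star_mulVec A x]

lemma psd_vmv (x : Fin d → ℂ) : (vecMulVec x (star x)).PosSemidef := by
  refine .of_dotProduct_mulVec_nonneg ?_ ?_
  · ext i j
    simp [conjTranspose_apply, vecMulVec_apply, mul_comm]
  · intro y
    rw [vmv_mulVec, dotProduct_smul, star_dotProduct x y, smul_eq_mul, mul_comm]
    exact mul_star_self_nonneg _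

open scoped MatrixOrder Matrix.Norms.L2Operator in
lemma posSemidef_iff_eq_transpose_mul_self {A : Matrix (Fin d) (Fin d) ℂ} :
    A.PosSemidef ↔ ∃ B : Matrix (Fin d) (Fin d) ℂ, A = Bᴴ * B := by
  refine ⟨fun hA => ?_, fun ⟨B, hB⟩ => hB ▸ posSemidef_conjTranspose_mul_self B⟩
  obtain ⟨B, hB⟩ := CStarAlgebra.nonneg_iff_eq_star_mul_self.mp (nonneg_iff_posSemidef.mpr hA)
  exact ⟨B, hB⟩

lemma obs_cleaner (u : E → Fin d → ℂ)
    (hu : ∀ e f, dotProduct (star (u e)) (u f) = if e = f then 1 else 0)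
    (Q : E → Matrix (Fin d) (Fin d) ℂ) (hQ : IsPOVM Q) :
    Cleaner (fun e => vecMulVec (u e) (star (u e))) Q := by
  choose B hB using fun e => posSemidef_iff_eq_transpose_mul_self.mp (hQ.1 e)
  set σ := (Fintype.equivFin (E × Fin d)) with hσ
  refine ⟨Fintype.card (E × Fin d),
    fun k => vecMulVec (u (σ.symm k).1) (B (σ.symm k).1 (σ.symm k).2), ?_, ?_⟩
  · beta_reduce
    rw [Equiv.sum_comp σ.symm (fun p => (vecMulVec (u p.1) (B p.1 p.2))ᴴ * vecMulVec (u p.1) (B p.1 p.2))]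
    rw [Fintype.sum_prod_type]
    have : ∀ e : E, ∑ i : Fin d,
        (vecMulVec (u e) (B e i))ᴴ * vecMulVec (u e) (B e i) = Q e := by
      intro e
      have : ∀ i : Fin d, (vecMulVec (u e) (B e i))ᴴ * vecMulVec (u e) (B e i)
          = vecMulVec (star (B e i)) (B e i) := by
        intro i
        rw [vmv_conjTranspose, vmv_mul_vmv, hu e e]
        simp
      simp only [this]
      rw [← ctms_eq_sum, ← hB]
    simp only [this]
    exact hQ.2
  · intro e0
    beta_reduce
    rw [Equiv.sum_comp σ.symm (fun p => (vecMulVec (u p.1) (B p.1 p.2))ᴴ *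
      vecMulVec (u e0) (star (u e0)) * vecMulVec (u p.1) (B p.1 p.2))]
    rw [Fintype.sum_prod_type]
    have key : ∀ (e : E) (i : Fin d), (vecMulVec (u e) (B e i))ᴴ *
        vecMulVec (u e0) (star (u e0)) * vecMulVec (u e) (B e i)
        = (if e = e0 then (1:ℂ) else 0) • vecMulVec (star (B e i)) (B e i) := by
      intro e i
      rw [vmv_conjTranspose, vmv_mul_vmv, hu e e0, smul_mul_assoc, vmv_mul_vmv, hu e0 e]
      rw [smul_smul]
      congr 1
      by_cases h : e = e0 <;> simp [h, eq_comm]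
    simp only [key, ← Finset.smul_sum, ← ctms_eq_sum, ← hB]
    simp [ite_smul, Finset.sum_ite_eq']

end Helpers

lemma mulVec_sum'' {d : ℕ} {ι : Type*} (M : Matrix (Fin d) (Fin d) ℂ) (s : Finset ι)
    (y : ι → Fin d → ℂ) : M *ᵥ (∑ k ∈ s, y k) = ∑ k ∈ s, M *ᵥ y k := by
  ext i
  simp [mulVec, dotProduct, Finset.sum_apply, Finset.mul_sum]
  rw [Finset.sum_comm]

set_option maxHeartbeats 1000000 in
/-- a POVM with exactly `d` outcomes on `ℂ^d` is clean iff it is an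
observable, i.e. its elements are the rank-one projections onto the vectors of an
orthonormal basis. -/
theorem clean_povm_stmt12 (d : ℕ) (hd : 1 ≤ d) (E : Type) [Fintype E] [DecidableEq E]
    (hcard : Fintype.card E = d)
    (P : E → Matrix (Fin d) (Fin d) ℂ) (hP : IsPOVM P) :
    Clean P ↔ ∃ u : E → (Fin d → ℂ),
      (∀ e f, dotProduct (star (u e)) (u f) = if e = f then 1 else 0) ∧
      (∀ e, P e = vecMulVec (u e) (star (u e))) := by
  constructor
  · intro hC
    -- there exists a family w with: w f ≠ 0, P f w f = w f, P e w f = 0 (e ≠ f)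
    have hwex : ∃ w : E → Fin d → ℂ, (∀ f, w f ≠ 0) ∧ (∀ f, P f *ᵥ w f = w f) ∧
        (∀ e f, e ≠ f → P e *ᵥ w f = 0) := by
      let σ : E ≃ Fin d := Fintype.equivFinOfCardEq hcard
      let v : E → Fin d → ℂ := fun e => Pi.single (σ e) 1
      have hvstar : ∀ e, star (v e) = v e := by
        intro e; ext j; simp [v, Pi.single_apply, apply_ite]
      have hv : ∀ e f, dotProduct (star (v e)) (v f) = if e = f then 1 else 0 := by
        intro e f
        rw [hvstar]
        simp [v, single_dotProduct, Pi.single_apply, σ.injective.eq_iff, eq_comm]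
      have hQvsum : ∑ e, vecMulVec (v e) (star (v e)) = 1 := by
        ext p q
        rw [Matrix.sum_apply]
        simp only [vecMulVec_apply, hvstar]
        rw [show (1 : Matrix (Fin d) (Fin d) ℂ) p q = if p = q then 1 else 0 from one_apply]
        rw [Finset.sum_eq_single (σ.symm p)]
        · simp [v, Pi.single_apply, Equiv.apply_symm_apply, eq_comm]
        · intro e _ he
          have : p ≠ σ e := fun hc => he (by rw [hc, Equiv.symm_apply_apply])
          simp [v, Pi.single_apply, this, Ne.symm this]
        · simp
      have hQv : IsPOVM (fun e => vecMulVec (v e) (star (v e))) :=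
        ⟨fun e => psd_vmv _, hQvsum⟩
      obtain ⟨n, A, hA1, hA2⟩ := hC _ hQv (obs_cleaner v hv P hP)
      -- `P e` kills `A k *ᵥ v f` when `e ≠ f`
      have hz : ∀ e f, e ≠ f → ∀ k, P e *ᵥ (A k *ᵥ v f) = 0 := by
        intro e f hef k
        have hterm : ∀ j, (0:ℂ) ≤ star (A j *ᵥ v f) ⬝ᵥ (P e *ᵥ (A j *ᵥ v f)) :=
          fun j => (hP.1 e).dotProduct_mulVec_nonneg _
        have hsum0 : ∑ j, star (A j *ᵥ v f) ⬝ᵥ (P e *ᵥ (A j *ᵥ v f)) = 0 := by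
          have hterm' : ∀ j, star (A j *ᵥ v f) ⬝ᵥ (P e *ᵥ (A j *ᵥ v f))
              = star (v f) ⬝ᵥ (((A j)ᴴ * P e * A j) *ᵥ v f) :=
            fun j => (sandwich _ _ _).symm
          rw [Finset.sum_congr rfl (fun j _ => hterm' j), ← dotProduct_sum',
            ← sum_mulVec', hA2 e]
          beta_reduce
          rw [vmv_mulVec, dotProduct_smul, hv e f]
          simp [hef]
        have hone := (Finset.sum_eq_zero_iff_of_nonneg
          (fun j _ => hterm j)).mp hsum0 k (Finset.mem_univ k)
        exact ((hP.1 e).dotProduct_mulVec_zero_iff _).mp hone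
      -- `A k *ᵥ v f` is fixed by `P f`
      have hfix : ∀ f k, P f *ᵥ (A k *ᵥ v f) = A k *ᵥ v f := by
        intro f k
        have h1 : (∑ e, P e) *ᵥ (A k *ᵥ v f) = A k *ᵥ v f := by
          rw [hP.2, one_mulVec]
        rw [sum_mulVec'] at h1
        rwa [Finset.sum_eq_single f (fun e _ he => hz e f he k) (by simp)] at h1
      -- some `A k *ᵥ v f` is nonzero
      have hex : ∀ f, ∃ k, A k *ᵥ v f ≠ 0 := by
        intro f
        by_contra hall
        push_neg at hall
        have h0 : star (v f) ⬝ᵥ ((∑ k, (A k)ᴴ * A k) *ᵥ v f) = 0 := by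
          rw [sum_mulVec', dotProduct_sum']
          refine Finset.sum_eq_zero fun k _ => ?_
          have : (A k)ᴴ * A k = (A k)ᴴ * 1 * A k := by rw [mul_one]
          rw [this, sandwich, hall k]
          simp
        rw [hA1, one_mulVec, hvstar] at h0
        simp [v, single_dotProduct, Pi.single_apply] at h0
      choose k0 hk0 using hex
      exact ⟨fun f => A (k0 f) *ᵥ v f, hk0, fun f => hfix f (k0 f),
        fun e f h => hz e f h (k0 f)⟩
    obtain ⟨w, hwne, hw1, hw0⟩ := hwex
    have horth : ∀ e f, e ≠ f → star (w e) ⬝ᵥ w f = 0 := by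
      intro e f h
      calc star (w e) ⬝ᵥ w f = star (w e) ⬝ᵥ (P f *ᵥ w f) := by rw [hw1 f]
        _ = (star (w e) ᵥ* P f) ⬝ᵥ w f := dotProduct_mulVec _ _ _
        _ = star ((P f) *ᵥ w e) ⬝ᵥ w f := by rw [star_mulVec, (hP.1 f).1.eq]
        _ = 0 := by rw [hw0 f e (Ne.symm h)]; simp
    -- normalization
    set nq : E → ℝ := fun f => ∑ i, Complex.normSq (w f i) with hnq
    have hcval : ∀ f, star (w f) ⬝ᵥ w f = (nq f : ℂ) := by
      intro f
      simp only [hnq, dotProduct, Pi.star_apply, Complex.star_def]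
      push_cast
      exact Finset.sum_congr rfl fun i _ => by
        rw [Complex.normSq_eq_conj_mul_self]
    have hnqpos : ∀ f, 0 < nq f := by
      intro f
      have hne : ∃ i, w f i ≠ 0 := by
        by_contra hc
        push_neg at hc
        exact hwne f (funext hc)
      obtain ⟨i, hi⟩ := hne
      exact Finset.sum_pos' (fun j _ => Complex.normSq_nonneg _)
        ⟨i, Finset.mem_univ i, Complex.normSq_pos.mpr hi⟩
    set r : E → ℝ := fun f => Real.sqrt (nq f) with hr
    have hrpos : ∀ f, 0 < r f := fun f => Real.sqrt_pos.mpr (hnqpos f)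
    have hrr : ∀ f, (r f : ℂ) * (r f : ℂ) = (nq f : ℂ) := by
      intro f
      rw [← Complex.ofReal_mul, Real.mul_self_sqrt (hnqpos f).le]
    set u : E → Fin d → ℂ := fun f => ((r f : ℂ))⁻¹ • w f with hu
    have hustar : ∀ f, star (u f) = ((r f : ℂ))⁻¹ • star (w f) := by
      intro f
      simp [hu, star_smul]
    have hONB : ∀ e f, dotProduct (star (u e)) (u f) = if e = f then 1 else 0 := by
      intro e f
      rw [hustar, hu]
      beta_reduce
      rw [smul_dotProduct, dotProduct_smul]
      by_cases h : e = f
      · subst h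
        rw [hcval e, if_pos rfl, smul_eq_mul, smul_eq_mul, ← hrr e]
        have hrne : ((r e : ℂ)) ≠ 0 := by
          exact_mod_cast (hrpos e).ne'
        field_simp
      · rw [horth e f h, if_neg h]
        simp
    have hPu : ∀ g e, P g *ᵥ u e = if e = g then u g else 0 := by
      intro g e
      rw [hu]
      beta_reduce
      rw [mulVec_smul]
      by_cases h : e = g
      · subst h
        rw [hw1 e, if_pos rfl]
      · rw [hw0 g e (fun hc => h hc.symm), if_neg h, smul_zero]
    -- u is linearly independent, hence a basis
    have li : LinearIndependent ℂ u := by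
      rw [Fintype.linearIndependent_iff]
      intro g hg f
      have h3 := congrArg (fun y => star (u f) ⬝ᵥ y) hg
      simp only [dotProduct_sum', dotProduct_smul, hONB, dotProduct_zero] at h3
      simpa [Finset.sum_ite_eq', smul_eq_mul] using h3
    haveI : Nonempty E := by
      rw [← Fintype.card_pos_iff, hcard]; exact hd
    have hcard' : Fintype.card E = Module.finrank ℂ (Fin d → ℂ) := by
      simp [hcard]
    let b : Module.Basis E ℂ (Fin d → ℂ) := basisOfLinearIndependentOfCardEqFinrank li hcard'
    have hb : ⇑b = u := coe_basisOfLinearIndependentOfCardEqFinrank _ _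
    refine ⟨u, hONB, fun g => ?_⟩
    have hmv : ∀ e, P g *ᵥ u e = vecMulVec (u g) (star (u g)) *ᵥ u e := by
      intro e
      rw [vmv_mulVec, hONB g e, hPu g e]
      by_cases h : e = g
      · subst h; simp
      · rw [if_neg h, if_neg (fun hc : g = e => h hc.symm), zero_smul]
    have hmv_all : ∀ x, P g *ᵥ x = vecMulVec (u g) (star (u g)) *ᵥ x := by
      intro x
      have hx := b.sum_repr x
      rw [← hx, mulVec_sum'', mulVec_sum'']
      refine Finset.sum_congr rfl fun e _ => ?_
      rw [mulVec_smul, mulVec_smul, hb, hmv e]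
    ext i j
    have h4 := congrFun (hmv_all (Pi.single j 1)) i
    simpa [mulVec_single] using h4
  · rintro ⟨u, hu, hPu⟩
    intro Q hQ _
    have hPe : P = fun e => vecMulVec (u e) (star (u e)) := funext hPu
    rw [hPe]
    exact obs_cleaner u hu Q hQ
end

section
/- Every POVM with at most d outcomes on ℂ^d is a pre-processing of the standard projective observable: for every POVM (P_i)_{i∈Fin d} on ℂ^d (elements are allowed to be zero, which covers POVMs with n < d outcomes by padding with zeros), there exists a finite Kraus family (A_k) of d×d complex matrices with ∑_k A_kᴴ A_k = 1 such that ∑_k A_kᴴ D_i A_k = P_i for every i ∈ Fin d, where D_i is the diagonal matrix unit with a single 1 in position (i,i) (i.e. the projector onto the i-th standard basis vector). -/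
open Matrix BigOperators
open scoped ComplexOrder

open scoped MatrixOrder in
lemma psd_exists_sqrt {d : ℕ} {M : Matrix (Fin d) (Fin d) ℂ} (h : M.PosSemidef) :
    ∃ B : Matrix (Fin d) (Fin d) ℂ, M = Bᴴ * B := by
  obtain ⟨B, hB⟩ := CStarAlgebra.nonneg_iff_eq_star_mul_self.mp h.nonneg
  exact ⟨B, hB⟩

/-- every POVM with at most `d` outcomes on `ℂ^d` (indexed by `Fin d`,
allowing zero elements) is a pre-processing of the standard projective observable
`(D_i)_i`, where `D_i` is the projector onto the `i`-th standard basis vector. -/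
theorem clean_povm_stmt13 (d : ℕ) (hd : 1 ≤ d)
    (P : Fin d → Matrix (Fin d) (Fin d) ℂ) (hP : IsPOVM P) :
    ∃ (n : ℕ) (A : Fin n → Matrix (Fin d) (Fin d) ℂ),
      ∑ k, (A k)ᴴ * A k = 1 ∧
      ∀ i : Fin d, ∑ k, (A k)ᴴ * Matrix.single i i (1 : ℂ) * A k = P i := by
  obtain ⟨hpos, hsum⟩ := hP
  set S : Fin d → Matrix (Fin d) (Fin d) ℂ := fun i => Classical.choose (psd_exists_sqrt (hpos i)) with hS
  set A : Fin d → Matrix (Fin d) (Fin d) ℂ := fun k => Matrix.of (fun i j => S i k j)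
    with hA
  have key : ∀ i : Fin d,
      ∑ k, (A k)ᴴ * Matrix.single i i (1 : ℂ) * A k = P i := by
    intro i
    have hsq : (S i)ᴴ * S i = P i := by
      exact (Classical.choose_spec (psd_exists_sqrt (hpos i))).symm
    ext a b
    have : ((S i)ᴴ * S i) a b = P i a b := by rw [hsq]
    rw [← this]
    simp only [Matrix.sum_apply, Matrix.mul_apply, Matrix.conjTranspose_apply,
      Matrix.single, Matrix.of_apply, hA]
    simp [ite_and, Finset.sum_ite_eq, Finset.sum_ite_eq']
  refine ⟨d, A, ?_, key⟩
  have expand : ∀ k, (A k)ᴴ * A k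
      = ∑ i, (A k)ᴴ * Matrix.single i i (1 : ℂ) * A k := by
    intro k
    have hone : (∑ i : Fin d, Matrix.single i i (1 : ℂ)) = 1 := by
      ext a b
      simp [Matrix.sum_apply, Matrix.single, Matrix.one_apply, Finset.sum_ite_eq', ite_and, eq_comm]
    rw [← Finset.sum_mul, ← Finset.mul_sum, hone, mul_one]
  calc ∑ k, (A k)ᴴ * A k
      = ∑ k, ∑ i, (A k)ᴴ * Matrix.single i i (1 : ℂ) * A k := by
        simp_rw [expand]
    _ = ∑ i, ∑ k, (A k)ᴴ * Matrix.single i i (1 : ℂ) * A k :=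
        Finset.sum_comm
    _ = ∑ i, P i := by simp_rw [key]
    _ = 1 := hsum
end

section
/- If the POVM Q on ℂ^d is informationally complete and P is a POVM with the same finite outcome set with P ≻ Q (i.e. there is a finite Kraus family (A_k) with ∑_k A_kᴴ A_k = 1 and ∑_k A_kᴴ P_e A_k = Q_e for every outcome e), then P is informationally complete as well. -/
open Matrix BigOperators
open scoped ComplexOrder

/-- A POVM is informationally complete if its elements span the whole matrix algebra. -/
def InfoComplete {d : ℕ} {E : Type} [Fintype E]
    (P : E → Matrix (Fin d) (Fin d) ℂ) : Prop :=
  Submodule.span ℂ (Set.range P) = ⊤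

/-- if `Q` is informationally complete and `P ≻ Q`, then `P` is
informationally complete as well. -/
theorem clean_povm_stmt14 (d : ℕ) (hd : 1 ≤ d) (E : Type) [Fintype E]
    (P Q : E → Matrix (Fin d) (Fin d) ℂ) (hP : IsPOVM P) (hQ : IsPOVM Q)
    (hQic : InfoComplete Q) (hPQ : Cleaner P Q) :
    InfoComplete P := by
  obtain ⟨n, A, hA1, hAQ⟩ := hPQ
  -- the channel as a linear map
  let Φ : Matrix (Fin d) (Fin d) ℂ →ₗ[ℂ] Matrix (Fin d) (Fin d) ℂ :=
    { toFun := fun X => ∑ k, (A k)ᴴ * X * A k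
      map_add' := by
        intro X Y
        simp [Matrix.mul_add, Matrix.add_mul, Finset.sum_add_distrib]
      map_smul' := by
        intro c X
        simp [Matrix.mul_smul, Matrix.smul_mul, Finset.smul_sum] }
  have hmap : Submodule.map Φ (Submodule.span ℂ (Set.range P)) = ⊤ := by
    rw [eq_top_iff, ← hQic, Submodule.span_le]
    rintro _ ⟨e, rfl⟩
    exact ⟨P e, Submodule.subset_span ⟨e, rfl⟩, hAQ e⟩
  have hle := Submodule.finrank_map_le Φ (Submodule.span ℂ (Set.range P))
  rw [hmap] at hle
  have htop : Module.finrank ℂ (⊤ : Submodule ℂ (Matrix (Fin d) (Fin d) ℂ))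
      = Module.finrank ℂ (Matrix (Fin d) (Fin d) ℂ) := finrank_top ℂ _
  refine Submodule.eq_top_of_finrank_eq ?_
  exact le_antisymm (Submodule.finrank_le _) (by omega)
end

section
/- Let P be an informationally complete POVM on ℂ^d and Q a POVM with the same finite outcome set. Then P ≃ Q if and only if P and Q are unitarily equivalent, i.e. if and only if there exists a unitary d×d matrix U with Q_e = U P_e Uᴴ for every outcome e. -/
open Matrix BigOperators
open scoped ComplexOrder

lemma kraus_scalar {d : ℕ} (hd : 1 ≤ d) {ι : Type} [Fintype ι]
    (C : ι → Matrix (Fin d) (Fin d) ℂ)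
    (h : ∀ X, ∑ i, (C i)ᴴ * X * C i = X) :
    ∀ i, ∃ c : ℂ, C i = c • 1 := by
  have key : ∀ a b p q : Fin d,
      ∑ i, (starRingEnd ℂ) (C i a p) * C i b q = if p = a ∧ q = b then 1 else 0 := by
    intro a b p q
    have h3 := Matrix.ext_iff.mpr (h (Matrix.single a b 1)) p q
    simp [Matrix.sum_apply, Matrix.mul_apply, Matrix.single, Matrix.conjTranspose_apply,
      Finset.sum_ite_eq, ite_and, Finset.mul_sum, Finset.sum_mul] at h3
    simpa [ite_and, eq_comm] using h3
  have offdiag : ∀ (i : ι) (a p : Fin d), p ≠ a → C i a p = 0 := by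
    intro i a p hpa
    have hk := key a a p p
    rw [if_neg (by simp [hpa])] at hk
    have hk' : ∑ i, (Complex.normSq (C i a p) : ℂ) = 0 := by
      rw [← hk]; refine Finset.sum_congr rfl fun j _ => ?_; rw [Complex.normSq_eq_conj_mul_self]
    have hk2 : ∑ i, Complex.normSq (C i a p) = 0 := by exact_mod_cast hk'
    have := (Finset.sum_eq_zero_iff_of_nonneg (fun j _ => Complex.normSq_nonneg _)).mp hk2
      i (Finset.mem_univ i)
    exact Complex.normSq_eq_zero.mp this
  have diag : ∀ (i : ι) (a b : Fin d), C i a a = C i b b := by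
    intro i a b
    have expand : ∑ i, (Complex.normSq (C i a a - C i b b) : ℂ) = 0 := by
      have e1 := key a a a a
      have e2 := key a b a b
      have e3 := key b a b a
      have e4 := key b b b b
      simp only [and_self, if_true, eq_self_iff_true] at e1 e2 e3 e4
      have : ∀ j : ι, (Complex.normSq (C j a a - C j b b) : ℂ) =
          (starRingEnd ℂ) (C j a a) * C j a a - (starRingEnd ℂ) (C j a a) * C j b b
          - (starRingEnd ℂ) (C j b b) * C j a a + (starRingEnd ℂ) (C j b b) * C j b b := by
        intro j
        rw [Complex.normSq_eq_conj_mul_self]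
        ring_nf
        simp [map_sub]
        ring
      simp only [this, Finset.sum_add_distrib, Finset.sum_sub_distrib, e1, e2, e3, e4]
      ring
    have hk2 : ∑ i, Complex.normSq (C i a a - C i b b) = 0 := by exact_mod_cast expand
    have := (Finset.sum_eq_zero_iff_of_nonneg (fun j _ => Complex.normSq_nonneg _)).mp hk2
      i (Finset.mem_univ i)
    exact sub_eq_zero.mp (Complex.normSq_eq_zero.mp this)
  intro i
  refine ⟨C i ⟨0, hd⟩ ⟨0, hd⟩, ?_⟩
  ext p q
  by_cases hpq : p = q
  · subst hpq
    simp [Matrix.one_apply, diag i p ⟨0, hd⟩]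
  · simp [Matrix.one_apply, hpq, offdiag i p q (Ne.symm hpq)]

/-- for an informationally complete POVM `P`, the equivalence `P ≃ Q`
holds iff `P` and `Q` are unitarily equivalent. -/
theorem clean_povm_stmt15 (d : ℕ) (hd : 1 ≤ d) (E : Type) [Fintype E]
    (P Q : E → Matrix (Fin d) (Fin d) ℂ) (hP : IsPOVM P) (hQ : IsPOVM Q)
    (hPic : InfoComplete P) :
    (Cleaner P Q ∧ Cleaner Q P) ↔
      ∃ U : Matrix (Fin d) (Fin d) ℂ, Uᴴ * U = 1 ∧ ∀ e, Q e = U * P e * Uᴴ := by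
  constructor
  · rintro ⟨⟨n, A, hA1, hA2⟩, ⟨m, B, hB1, hB2⟩⟩
    set C : Fin n × Fin m → Matrix (Fin d) (Fin d) ℂ := fun i => A i.1 * B i.2 with hC
    have hcomp : ∀ X : Matrix (Fin d) (Fin d) ℂ,
        ∑ i, (C i)ᴴ * X * (C i) = ∑ j, (B j)ᴴ * (∑ k, (A k)ᴴ * X * A k) * B j := by
      intro X
      rw [Fintype.sum_prod_type, Finset.sum_comm]
      refine Finset.sum_congr rfl fun j _ => ?_
      rw [Finset.mul_sum, Finset.sum_mul]
      refine Finset.sum_congr rfl fun k _ => ?_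
      simp [hC, Matrix.conjTranspose_mul, Matrix.mul_assoc]
    have hfix : ∀ e, ∑ i, (C i)ᴴ * P e * (C i) = P e := by
      intro e
      rw [hcomp, hA2 e, hB2 e]
    have hPic' : Submodule.span ℂ (Set.range P) = ⊤ := hPic
    have hid : ∀ X, ∑ i, (C i)ᴴ * X * (C i) = X := by
      have hspan : ∀ X ∈ Submodule.span ℂ (Set.range P),
          ∑ i, (C i)ᴴ * X * (C i) = X := by
        intro X hX
        induction hX using Submodule.span_induction with
        | mem x hx => obtain ⟨e, rfl⟩ := hx; exact hfix e
        | zero => simp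
        | add x y _ _ hx hy =>
            simp only [Matrix.mul_add, Matrix.add_mul, Finset.sum_add_distrib, hx, hy]
        | smul a x _ hx =>
            simp only [Matrix.mul_smul, Matrix.smul_mul, ← Finset.smul_sum, hx]
      intro X
      exact hspan X (by rw [hPic']; trivial)
    have hks := kraus_scalar hd C hid
    choose c hc using hks
    have hc' : ∀ p : Fin n × Fin m, A p.1 * B p.2 = c p • 1 := hc
    set a0 : Fin d := ⟨0, hd⟩ with ha0
    have hsum1 : (∑ i, (starRingEnd ℂ) (c i) * c i) • (1 : Matrix (Fin d) (Fin d) ℂ) = 1 := by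
      calc (∑ i, (starRingEnd ℂ) (c i) * c i) • (1 : Matrix (Fin d) (Fin d) ℂ)
          = ∑ i, (C i)ᴴ * 1 * (C i) := by
            rw [Finset.sum_smul]
            refine Finset.sum_congr rfl fun i _ => ?_
            rw [hc i]
            simp [Matrix.conjTranspose_smul, Matrix.smul_mul, Matrix.mul_smul, smul_smul,
              mul_comm]
        _ = 1 := hid 1
    have hsum1' : ∑ i, (starRingEnd ℂ) (c i) * c i = 1 := by
      have := Matrix.ext_iff.mpr hsum1 a0 a0
      simpa [Matrix.one_apply] using this
    have hex : ∃ i, c i ≠ 0 := by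
      by_contra hno
      push_neg at hno
      rw [Finset.sum_eq_zero (fun i _ => by rw [hno i]; simp)] at hsum1'
      exact zero_ne_one hsum1'
    obtain ⟨i0, hi0⟩ := hex
    have hCi0 : A i0.1 * B i0.2 = c i0 • 1 := hc' i0
    have hBinv : B i0.2 * ((c i0)⁻¹ • A i0.1) = 1 := by
      rw [mul_eq_one_comm]
      rw [Matrix.smul_mul, hCi0, smul_smul, inv_mul_cancel₀ hi0, one_smul]
    set μ : Fin n → ℂ := fun k => c (k, i0.2) * (c i0)⁻¹ with hμ
    have hAk : ∀ k, A k = μ k • A i0.1 := by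
      intro k
      calc A k = A k * (B i0.2 * ((c i0)⁻¹ • A i0.1)) := by rw [hBinv, Matrix.mul_one]
      _ = (A k * B i0.2) * ((c i0)⁻¹ • A i0.1) := by rw [Matrix.mul_assoc]
      _ = (c (k, i0.2) • 1) * ((c i0)⁻¹ • A i0.1) := by rw [hc' (k, i0.2)]
      _ = μ k • A i0.1 := by
          rw [Matrix.smul_mul, Matrix.mul_smul, Matrix.one_mul, smul_smul, hμ]
    set s : ℝ := ∑ k, Complex.normSq (μ k) with hs
    have hAA : (s : ℂ) • ((A i0.1)ᴴ * A i0.1) = 1 := by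
      rw [← hA1, hs]
      push_cast
      rw [Finset.sum_smul]
      refine Finset.sum_congr rfl fun k _ => ?_
      rw [hAk k]
      simp [Matrix.conjTranspose_smul, Matrix.smul_mul, Matrix.mul_smul, smul_smul,
        Complex.normSq_eq_conj_mul_self, mul_comm]
    have hs0 : s ≠ 0 := by
      intro h0
      have := Matrix.ext_iff.mpr hAA a0 a0
      rw [h0] at this
      simpa [Matrix.one_apply] using this
    have hspos : 0 < s :=
      lt_of_le_of_ne (Finset.sum_nonneg fun k _ => Complex.normSq_nonneg _) (Ne.symm hs0)
    have hcs : (star ((Real.sqrt s : ℝ) : ℂ)) * ((Real.sqrt s : ℝ) : ℂ) = (s : ℂ) := by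
      rw [Complex.star_def, Complex.conj_ofReal, ← Complex.ofReal_mul,
        Real.mul_self_sqrt hspos.le]
    set U0 : Matrix (Fin d) (Fin d) ℂ := ((Real.sqrt s : ℝ) : ℂ) • A i0.1 with hU0
    have hU0U0 : U0ᴴ * U0 = 1 := by
      rw [hU0, Matrix.conjTranspose_smul, Matrix.smul_mul, Matrix.mul_smul, smul_smul, hcs, hAA]
    have hQe : ∀ e, Q e = U0ᴴ * P e * U0 := by
      intro e
      have h1 : U0ᴴ * P e * U0 = (s : ℂ) • ((A i0.1)ᴴ * P e * A i0.1) := by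
        rw [hU0, Matrix.conjTranspose_smul, Matrix.smul_mul, Matrix.smul_mul, Matrix.mul_smul,
          smul_smul, hcs]
      rw [← hA2 e, h1, hs]
      push_cast
      rw [Finset.sum_smul]
      refine Finset.sum_congr rfl fun k _ => ?_
      rw [hAk k]
      simp [Matrix.conjTranspose_smul, Matrix.smul_mul, Matrix.mul_smul, smul_smul,
        Complex.normSq_eq_conj_mul_self, mul_comm]
    refine ⟨U0ᴴ, ?_, ?_⟩
    · rw [Matrix.conjTranspose_conjTranspose, mul_eq_one_comm]
      exact hU0U0
    · intro e
      rw [Matrix.conjTranspose_conjTranspose]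
      exact hQe e
  · rintro ⟨U, hU, hUe⟩
    have hUU : U * Uᴴ = 1 := mul_eq_one_comm.mp hU
    constructor
    · exact ⟨1, fun _ => Uᴴ, by simpa using hUU, fun e => by
        simpa [Matrix.conjTranspose_conjTranspose] using (hUe e).symm⟩
    · refine ⟨1, fun _ => U, by simpa using hU, fun e => ?_⟩
      simp [hUe e, Matrix.mul_assoc, hU]
      rw [← Matrix.mul_assoc, hU, Matrix.one_mul]
end
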